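/- arXiv:2312.05987 — 7 statements merged into one kernel-verified Lean document; each statement's English description precedes it below -/
import Mathlib

section
/- For any point p in the interior of a convex body Ω and any radius ρ > 0, the closed Hilbert ball B(p,ρ) = { x ∈ int(Ω) : d_Ω(p,x) ≤ ρ } is a convex subset of int(Ω). -/
open Filter Topology
open scoped Classical

/-- The parameter at which the ray `t ↦ p + t • v` exits the set `Ω`. -/
noncomputable def exitTime (Ω : Set (EuclideanSpace ℝ (Fin 2)))
    (p v : EuclideanSpace ℝ (Fin 2)) : ℝ :=
  sSup {t : ℝ | p + t • v ∈ Ω}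

/-- The endpoint of the chord of `Ω` from `p` in direction `v`. -/
noncomputable def chordEnd (Ω : Set (EuclideanSpace ℝ (Fin 2)))
    (p v : EuclideanSpace ℝ (Fin 2)) : EuclideanSpace ℝ (Fin 2) :=
  p + exitTime Ω p v • v

/-- The Hilbert distance in the convex body `Ω`: for distinct `p q`, with chord
endpoints `p' = chordEnd Ω p (p - q)` (beyond `p`) and `q' = chordEnd Ω q (q - p)`
(beyond `q`), ordered `⟨p', p, q, q'⟩`,
`d_Ω(p,q) = (1/2) log ((‖q - p'‖/‖p - p'‖) * (‖p - q'‖/‖q - q'‖))`. -/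
noncomputable def hilbertDist (Ω : Set (EuclideanSpace ℝ (Fin 2)))
    (p q : EuclideanSpace ℝ (Fin 2)) : ℝ :=
  if p = q then 0
  else
    (1 / 2) * Real.log
      ((‖q - chordEnd Ω p (p - q)‖ / ‖p - chordEnd Ω p (p - q)‖) *
        (‖p - chordEnd Ω q (q - p)‖ / ‖q - chordEnd Ω q (q - p)‖))

/-- A convex body in the plane: compact, convex, with nonempty interior. -/
def IsConvexBody (Ω : Set (EuclideanSpace ℝ (Fin 2))) : Prop :=
  IsCompact Ω ∧ Convex ℝ Ω ∧ (interior Ω).Nonempty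

open Bornology Metric Set

variable {E : Type*} [NormedAddCommGroup E] [NormedSpace ℝ E]

/-- Key: the sup of `{t | t • v ∈ s}` is `(gauge s v)⁻¹`. -/
lemma isGreatest_smul_mem (s : Set E) (hconv : Convex ℝ s) (hcl : IsClosed s)
    (hnhds : s ∈ 𝓝 0) (hbdd : IsVonNBounded ℝ s) {v : E} (hv : v ≠ 0) :
    IsGreatest {t : ℝ | t • v ∈ s} (gauge s v)⁻¹ := by
  have habs : Absorbent ℝ s := absorbent_nhds_zero hnhds
  have hpos : 0 < gauge s v := (gauge_pos habs hbdd).2 hv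
  constructor
  · show (gauge s v)⁻¹ • v ∈ s
    have : (gauge s v)⁻¹ • v ∈ closure s := by
      rw [← gauge_le_one_iff_mem_closure hconv hnhds,
        gauge_smul_of_nonneg (inv_nonneg.2 hpos.le), smul_eq_mul,
        inv_mul_cancel₀ hpos.ne']
    rwa [hcl.closure_eq] at this
  · intro t ht
    rcases le_or_gt t 0 with h | h
    · exact h.trans (inv_nonneg.2 hpos.le)
    · have h1 : gauge s (t • v) ≤ 1 := gauge_le_one_of_mem ht
      rw [gauge_smul_of_nonneg h.le, smul_eq_mul] at h1
      rw [inv_eq_one_div, le_div_iff₀ hpos]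
      exact h1

section Hilbert

local notation "E2" => EuclideanSpace ℝ (Fin 2)


variable {Ω : Set E2} {p : E2}

structure GaugeSetup (Ω : Set E2) (p : E2) : Prop where
  hconv : Convex ℝ ((p + ·) ⁻¹' Ω)
  hcl : IsClosed ((p + ·) ⁻¹' Ω)
  hnhds : (p + ·) ⁻¹' Ω ∈ 𝓝 (0 : E2)
  hbdd : IsVonNBounded ℝ ((p + ·) ⁻¹' Ω)

lemma gaugeSetup (hΩc : IsCompact Ω) (hΩconv : Convex ℝ Ω) (hp : p ∈ interior Ω) :
    GaugeSetup Ω p := by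
  constructor
  · have heq : ((p + ·) ⁻¹' Ω) = ((· + p) ⁻¹' Ω) := by
      ext x; simp [add_comm]
    rw [heq]
    exact hΩconv.translate_preimage_left p
  · exact hΩc.isClosed.preimage (continuous_add_left p)
  · have h0 : (0 : E2) ∈ interior ((p + ·) ⁻¹' Ω) := by
      have heq : (p + ·) ⁻¹' Ω = (Homeomorph.addLeft p) ⁻¹' Ω := rfl
      rw [heq, ← (Homeomorph.addLeft p).preimage_interior Ω]
      simpa using hp
    exact mem_interior_iff_mem_nhds.1 h0
  · refine NormedSpace.isVonNBounded_of_isBounded _ ?_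
    obtain ⟨R, hR⟩ := hΩc.isBounded.subset_closedBall 0
    refine (isBounded_closedBall (x := (0:E2)) (r := R + ‖p‖)).subset ?_
    intro x hx
    rw [mem_closedBall_zero_iff]
    have h1 : ‖p + x‖ ≤ R := by simpa [mem_closedBall_zero_iff] using hR hx
    calc ‖x‖ = ‖(p + x) - p‖ := by rw [add_sub_cancel_left]
    _ ≤ ‖p + x‖ + ‖p‖ := norm_sub_le _ _
    _ ≤ R + ‖p‖ := by linarith

lemma mem_interior_iff_gauge (h : GaugeSetup Ω p) (x : E2) :
    x ∈ interior Ω ↔ gauge ((p + ·) ⁻¹' Ω) (x - p) < 1 := by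
  rw [gauge_lt_one_iff_mem_interior h.hconv h.hnhds]
  have heq : (p + ·) ⁻¹' Ω = (Homeomorph.addLeft p) ⁻¹' Ω := rfl
  rw [heq, ← (Homeomorph.addLeft p).preimage_interior Ω]
  simp

lemma exitTime_eq (h : GaugeSetup Ω p) {v : E2} (hv : v ≠ 0) :
    exitTime Ω p v = (gauge ((p + ·) ⁻¹' Ω) v)⁻¹ := by
  have : {t : ℝ | p + t • v ∈ Ω} = {t : ℝ | t • v ∈ (p + ·) ⁻¹' Ω} := rfl
  rw [exitTime, this]
  exact (isGreatest_smul_mem _ h.hconv h.hcl h.hnhds h.hbdd hv).csSup_eq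

lemma exitTime_eq' (h : GaugeSetup Ω p) {q : E2} (hq : q ≠ p) :
    exitTime Ω q (q - p) = (gauge ((p + ·) ⁻¹' Ω) (q - p))⁻¹ - 1 := by
  set s := (p + ·) ⁻¹' Ω
  have hv : q - p ≠ 0 := sub_ne_zero.2 hq
  have habs : Absorbent ℝ s := absorbent_nhds_zero h.hnhds
  have hpos : 0 < gauge s (q - p) := (gauge_pos habs h.hbdd).2 hv
  have hset : {t : ℝ | q + t • (q - p) ∈ Ω} = {t : ℝ | (1 + t) • (q - p) ∈ s} := by
    ext t
    have : q + t • (q - p) = p + (1 + t) • (q - p) := by module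
    simp only [Set.mem_setOf_eq, this, s, Set.mem_preimage]
  rw [exitTime, hset]
  have hG := isGreatest_smul_mem s h.hconv h.hcl h.hnhds h.hbdd hv
  have : IsGreatest {t : ℝ | (1 + t) • (q - p) ∈ s} ((gauge s (q - p))⁻¹ - 1) := by
    constructor
    · show (1 + ((gauge s (q-p))⁻¹ - 1)) • (q - p) ∈ s
      have : 1 + ((gauge s (q-p))⁻¹ - 1) = (gauge s (q-p))⁻¹ := by ring
      rw [this]
      exact hG.1
    · intro t ht
      have := hG.2 ht
      linarith
  exact this.csSup_eq



lemma hilbertDist_formula (h : GaugeSetup Ω p) {x : E2}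
    (hx : x ∈ interior Ω) (hne : x ≠ p) :
    hilbertDist Ω p x = (1/2) * Real.log
      ((1 + gauge ((p + ·) ⁻¹' Ω) (p - x)) * (1 - gauge ((p + ·) ⁻¹' Ω) (x - p))⁻¹) := by
  set s := (p + ·) ⁻¹' Ω with hs
  set a := gauge s (p - x) with ha
  set b := gauge s (x - p) with hb
  have habs : Absorbent ℝ s := absorbent_nhds_zero h.hnhds
  have hapos : 0 < a := (gauge_pos habs h.hbdd).2 (sub_ne_zero.2 (Ne.symm hne))
  have hbpos : 0 < b := (gauge_pos habs h.hbdd).2 (sub_ne_zero.2 hne)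
  have hblt : b < 1 := (mem_interior_iff_gauge h x).1 hx
  have hn : (0:ℝ) < ‖p - x‖ := by
    rw [norm_pos_iff]; exact sub_ne_zero.2 (Ne.symm hne)
  have hxp : ‖x - p‖ = ‖p - x‖ := norm_sub_rev _ _
  unfold hilbertDist
  rw [if_neg (Ne.symm hne)]
  unfold chordEnd
  rw [exitTime_eq h (sub_ne_zero.2 (Ne.symm hne)), exitTime_eq' h hne]
  rw [← hs, ← ha, ← hb]
  have e1 : x - (p + a⁻¹ • (p - x)) = -((1 + a⁻¹) • (p - x)) := by module
  have e2 : p - (p + a⁻¹ • (p - x)) = -(a⁻¹ • (p - x)) := by module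
  have e3 : p - (x + (b⁻¹ - 1) • (x - p)) = -(b⁻¹ • (x - p)) := by module
  have e4 : x - (x + (b⁻¹ - 1) • (x - p)) = -((b⁻¹ - 1) • (x - p)) := by module
  rw [e1, e2, e3, e4, norm_neg, norm_neg, norm_neg, norm_neg,
    norm_smul, norm_smul, norm_smul, norm_smul, hxp]
  congr 1
  rw [Real.norm_eq_abs, Real.norm_eq_abs, Real.norm_eq_abs, Real.norm_eq_abs,
    abs_of_pos (by positivity : (0:ℝ) < 1 + a⁻¹), abs_of_pos (by positivity : (0:ℝ) < a⁻¹),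
    abs_of_pos (by positivity : (0:ℝ) < b⁻¹),
    abs_of_pos (by rw [sub_pos]; exact (one_lt_inv_iff₀).2 ⟨hbpos, hblt⟩ : (0:ℝ) < b⁻¹ - 1)]
  rw [mul_div_mul_right _ _ hn.ne', mul_div_mul_right _ _ hn.ne']
  field_simp
  ring_nf

lemma hilbertDist_le_iff (h : GaugeSetup Ω p) {x : E2} (hx : x ∈ interior Ω)
    {ρ : ℝ} (hρ : 0 < ρ) :
    hilbertDist Ω p x ≤ ρ ↔
      gauge ((p + ·) ⁻¹' Ω) (p - x) + Real.exp (2*ρ) * gauge ((p + ·) ⁻¹' Ω) (x - p)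
        ≤ Real.exp (2*ρ) - 1 := by
  set s := (p + ·) ⁻¹' Ω with hs
  have hK : 1 < Real.exp (2*ρ) := by
    rw [← Real.exp_zero]; exact Real.exp_lt_exp.2 (by linarith)
  rcases eq_or_ne x p with rfl | hne
  · simp only [hilbertDist, if_pos rfl, sub_self, gauge_zero, if_true]
    constructor <;> intro <;> [linarith; linarith [hρ]]
  · rw [hilbertDist_formula h hx hne, ← hs]
    set a := gauge s (p - x) with ha
    set b := gauge s (x - p) with hb
    have habs : Absorbent ℝ s := absorbent_nhds_zero h.hnhds
    have hapos : 0 < a := (gauge_pos habs h.hbdd).2 (sub_ne_zero.2 (Ne.symm hne))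
    have hbpos : 0 < b := (gauge_pos habs h.hbdd).2 (sub_ne_zero.2 hne)
    have hblt : b < 1 := (mem_interior_iff_gauge h x).1 hx
    have hX : (0:ℝ) < (1 + a) * (1 - b)⁻¹ :=
      mul_pos (by linarith) (inv_pos.2 (by linarith))
    have hhalf : (1/2 : ℝ) * Real.log ((1 + a) * (1 - b)⁻¹) ≤ ρ ↔
        Real.log ((1 + a) * (1 - b)⁻¹) ≤ 2 * ρ := by constructor <;> intro <;> linarith
    rw [hhalf, Real.log_le_iff_le_exp hX, ← div_eq_mul_inv,
      div_le_iff₀ (by linarith : (0:ℝ) < 1 - b)]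
    constructor <;> intro <;> nlinarith

end Hilbert

/-- Closed Hilbert balls are convex subsets of the interior of `Ω`. -/
theorem hilbertBall_convex (Ω : Set (EuclideanSpace ℝ (Fin 2))) (hΩ : IsConvexBody Ω)
    (p : EuclideanSpace ℝ (Fin 2)) (hp : p ∈ interior Ω) (ρ : ℝ) (hρ : 0 < ρ) :
    Convex ℝ {x | x ∈ interior Ω ∧ hilbertDist Ω p x ≤ ρ} ∧
      {x | x ∈ interior Ω ∧ hilbertDist Ω p x ≤ ρ} ⊆ interior Ω := by

  obtain ⟨hc, hconv, -⟩ := hΩ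
  have h := gaugeSetup hc hconv hp
  set s := (p + ·) ⁻¹' Ω with hs
  set K := Real.exp (2*ρ) with hKdef
  have habs : Absorbent ℝ s := absorbent_nhds_zero h.hnhds
  have hK : 1 < K := by
    rw [hKdef, ← Real.exp_zero]; exact Real.exp_lt_exp.2 (by linarith)
  refine ⟨?_, fun x hx => hx.1⟩
  intro x hx y hy c d hc' hd' hcd
  obtain ⟨hxi, hxd⟩ := hx
  obtain ⟨hyi, hyd⟩ := hy
  rw [hilbertDist_le_iff h hxi hρ, ← hs, ← hKdef] at hxd
  rw [hilbertDist_le_iff h hyi hρ, ← hs, ← hKdef] at hyd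
  have hzi : c • x + d • y ∈ interior Ω := hconv.interior hxi hyi hc' hd' hcd
  simp only [Set.mem_setOf_eq]
  refine ⟨hzi, ?_⟩
  rw [hilbertDist_le_iff h hzi hρ, ← hs, ← hKdef]
  obtain rfl : d = 1 - c := by linarith
  have e1 : p - (c • x + (1-c) • y) = c • (p - x) + (1-c) • (p - y) := by module
  have e2 : (c • x + (1-c) • y) - p = c • (x - p) + (1-c) • (y - p) := by module
  rw [e1, e2]
  have g1 : gauge s (c • (p - x) + (1-c) • (p - y)) ≤ c * gauge s (p - x) + (1-c) * gauge s (p - y) := by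
    refine (gauge_add_le h.hconv habs _ _).trans ?_
    rw [gauge_smul_of_nonneg hc', gauge_smul_of_nonneg hd', smul_eq_mul, smul_eq_mul]
  have g2 : gauge s (c • (x - p) + (1-c) • (y - p)) ≤ c * gauge s (x - p) + (1-c) * gauge s (y - p) := by
    refine (gauge_add_le h.hconv habs _ _).trans ?_
    rw [gauge_smul_of_nonneg hc', gauge_smul_of_nonneg hd', smul_eq_mul, smul_eq_mul]
  nlinarith [mul_le_mul_of_nonneg_left hxd hc', mul_le_mul_of_nonneg_left hyd hd',
    mul_le_mul_of_nonneg_left g2 (by linarith : (0:ℝ) ≤ K)]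
end

section
/- In any metric space, the minimum spanning tree of a finite point set is a subgraph of the relative neighborhood graph: if an edge {p,q} belongs to some minimum spanning tree of P (with edge weights the metric distances), then there is no point r ∈ P \ {p,q} with d(p,r) < d(p,q) and d(q,r) < d(p,q). -/
open scoped Classical

/-- The total weight of a graph on a finite point set in a metric space, where
edge weights are the metric distances. -/
noncomputable def graphWeight {X : Type*} [MetricSpace X] {P : Finset X}
    (G : SimpleGraph ↥P) : ℝ :=
  ∑ e ∈ G.edgeFinset, Sym2.lift ⟨fun (a b : ↥P) => dist (a : X) (b : X),
    fun a b => dist_comm (a : X) (b : X)⟩ e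

/-!
Cut-and-exchange: deleting the edge `pq` splits the tree `T` into the component of `p` and
the component of `q`. If `r` lies on the side of `p`, then replacing `pq` by `qr` yields
another spanning tree, lighter than `T` by `d(p,q) - d(q,r) > 0`; symmetrically with `pr` if
`r` lies on the side of `q`. Hence no such `r` exists when `T` is minimal.
-/

namespace SimpleGraph

variable {V : Type*} {G : SimpleGraph V}

theorem Connected.reachable_deleteEdges_or (hG : G.Connected) (p q v : V) :
    (G.deleteEdges {s(p, q)}).Reachable v p ∨ (G.deleteEdges {s(p, q)}).Reachable v q := by
  by_cases hvp : (G.deleteEdges {s(p, q)}).Reachable v p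
  · exact .inl hvp
  right
  obtain ⟨w, hw⟩ := hG.exists_isPath v p
  have hpq_mem : s(p, q) ∈ w.edges := w.mem_edges_of_not_reachable_deleteEdges hvp
  have hq : q ∈ w.support := w.snd_mem_support_of_mem_edges hpq_mem
  have hpq : p ≠ q := (w.adj_of_mem_edges hpq_mem).ne
  set w' := w.takeUntil q hq
  -- a path visits its endpoint `p` only at the end, so its part up to `q` avoids `pq`
  have hp : p ∉ w'.support := Walk.endpoint_notMem_support_takeUntil hw hq hpq
  have hpq_not_mem : s(p, q) ∉ w'.edges := fun h => hp (w'.fst_mem_support_of_mem_edges h)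
  exact ⟨w'.toDeleteEdges {s(p, q)} fun e he he' => hpq_not_mem (Set.mem_singleton_iff.mp he' ▸ he)⟩

theorem connected_sup_edge_of_forall_reachable_or {a b : V}
    (h : ∀ v, G.Reachable v a ∨ G.Reachable v b) : (G ⊔ edge a b).Connected := by
  have hba : (G ⊔ edge a b).Reachable b a := by
    by_cases hab : a = b
    · rw [hab]
    · exact Adj.reachable (by simp [edge_adj, Ne.symm hab])
  refine (connected_iff_exists_forall_reachable _).mpr ⟨a, fun v => ?_⟩
  rcases h v with hva | hvb
  · exact (hva.mono le_sup_left).symm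
  · exact ((hvb.mono le_sup_left).trans hba).symm

theorem IsTree.deleteEdges_sup_edge {p q r : V} (hT : G.IsTree) (hpq : G.Adj p q)
    (hrp : (G.deleteEdges {s(p, q)}).Reachable r p) :
    (G.deleteEdges {s(p, q)} ⊔ edge q r).IsTree := by
  have hbridge : ¬ (G.deleteEdges {s(p, q)}).Reachable p q :=
    isAcyclic_iff_forall_adj_isBridge.mp hT.isAcyclic hpq
  refine ⟨connected_sup_edge_of_forall_reachable_or fun v => ?_, ?_⟩
  · exact (hT.connected.reachable_deleteEdges_or p q v).symm.imp_right (·.trans hrp.symm)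
  · exact (hT.isAcyclic.anti (deleteEdges_le _)).sup_edge_of_not_reachable
      fun hqr => hbridge (hrp.symm.trans hqr.symm)

end SimpleGraph

open SimpleGraph

section graphWeight

variable {X : Type*} [MetricSpace X] {P : Finset X} {G : SimpleGraph ↥P}

theorem graphWeight_sup_edge {u v : ↥P} (huv : u ≠ v) (hn : ¬ G.Adj u v) :
    graphWeight (G ⊔ edge u v) = dist (u : X) v + graphWeight G := by
  unfold graphWeight
  -- `convert`, not `rw`: the lemma's `Fintype` instance on the edge set is not the classical one
  convert Finset.sum_cons _ using 2
  · convert G.edgeFinset_sup_edge hn huv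
  · rfl

theorem graphWeight_eq_add_deleteEdges {u v : ↥P} (huv : G.Adj u v) :
    graphWeight G = dist (u : X) v + graphWeight (G.deleteEdges {s(u, v)}) := by
  unfold graphWeight
  rw [← Finset.add_sum_erase _ _ (mem_edgeFinset.mpr (G.mem_edgeSet.mpr huv))]
  congr 2
  ext e
  simp [and_comm]

end graphWeight

/-- In any metric space, every minimum spanning tree of a finite point
set is a subgraph of the relative neighborhood graph. -/
theorem mst_subgraph_rng {X : Type*} [MetricSpace X] (P : Finset X)
    (T : SimpleGraph ↥P) (hconn : T.Connected) (hacyc : T.IsAcyclic)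
    (hmin : ∀ T' : SimpleGraph ↥P, T'.Connected → T'.IsAcyclic →
      graphWeight T ≤ graphWeight T')
    (p q : ↥P) (hpq : T.Adj p q) :
    ¬ ∃ r : ↥P, r ≠ p ∧ r ≠ q ∧
        dist (p : X) (r : X) < dist (p : X) (q : X) ∧
        dist (q : X) (r : X) < dist (p : X) (q : X) := by
  rintro ⟨r, hrp, hrq, hpr, hqr⟩
  wlog hside : (T.deleteEdges {s(p, q)}).Reachable r p generalizing p q
  · have hqp : dist (q : X) p = dist (p : X) q := _root_.dist_comm _ _
    refine this q p hpq.symm hrq hrp (hqp ▸ hqr) (hqp ▸ hpr) ?_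
    rw [Sym2.eq_swap]
    exact (hconn.reachable_deleteEdges_or p q r).resolve_left hside
  have hqr_new : ¬ (T.deleteEdges {s(p, q)}).Adj q r := fun hqr' =>
    isAcyclic_iff_forall_adj_isBridge.mp hacyc hpq (hside.symm.trans hqr'.reachable.symm)
  have hexchange := IsTree.deleteEdges_sup_edge ⟨hconn, hacyc⟩ hpq hside
  have hle := hmin _ hexchange.connected hexchange.isAcyclic
  rw [graphWeight_eq_add_deleteEdges hpq, graphWeight_sup_edge hrq.symm hqr_new] at hle
  linarith
end

section
/- Existence of a Hilbert midpoint: for any distinct p, q ∈ int(Ω), there exists a unique point c on the open segment from p to q with d_Ω(p,c) = d_Ω(c,q). -/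
open Filter Topology
open scoped Classical

/-!
On the line `s ↦ p + s • (q - p)` the chord of `Ω` ends at parameters `lo < 0` and `hi > 1`, and
the Hilbert distance between the parameters `a < b` is `f b - f a`, where
`f s = ½ log ((s - lo) / (hi - s))`. Hence `d(p, c) = d(c, q)` says that `f s` is the average of
`f 0` and `f 1`; since `f` is continuous and strictly increasing, exactly one `s ∈ (0, 1)` does it.
-/

/-- The coordinate in which the Hilbert metric of the interval `(lo, hi)` is the standard metric
of `ℝ`. -/
noncomputable def hilbertCoord (lo hi s : ℝ) : ℝ :=
  1 / 2 * Real.log ((s - lo) / (hi - s))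

theorem strictMonoOn_hilbertCoord (lo hi : ℝ) :
    StrictMonoOn (hilbertCoord lo hi) (Set.Ioo lo hi) := by
  intro a ha b hb hab
  have hpos : 0 < (a - lo) / (hi - a) := div_pos (sub_pos.2 ha.1) (sub_pos.2 ha.2)
  have hlt : (a - lo) / (hi - a) < (b - lo) / (hi - b) := by
    rw [div_lt_div_iff₀ (sub_pos.2 ha.2) (sub_pos.2 hb.2)]
    nlinarith [ha.1, hb.2]
  exact mul_lt_mul_of_pos_left (Real.log_lt_log hpos hlt) one_half_pos

theorem continuousOn_hilbertCoord (lo hi : ℝ) :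
    ContinuousOn (hilbertCoord lo hi) (Set.Ioo lo hi) := by
  unfold hilbertCoord
  fun_prop (disch := first
    | exact fun s hs => (sub_pos.2 hs.2).ne'
    | exact fun s hs => (div_pos (sub_pos.2 hs.1) (sub_pos.2 hs.2)).ne')

theorem StrictMonoOn.existsUnique_sub_eq_sub {f : ℝ → ℝ} {a b : ℝ} (hab : a < b)
    (hf : StrictMonoOn f (Set.Icc a b)) (hfc : ContinuousOn f (Set.Icc a b)) :
    ∃! s, s ∈ Set.Ioo a b ∧ f s - f a = f b - f s := by
  have hfab : f a < f b := hf (Set.left_mem_Icc.2 hab.le) (Set.right_mem_Icc.2 hab.le) hab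
  obtain ⟨s, hs, hfs⟩ := intermediate_value_Ioo hab.le hfc
    (show (f a + f b) / 2 ∈ Set.Ioo (f a) (f b) from ⟨by linarith, by linarith⟩)
  refine ⟨s, ⟨hs, by linarith⟩, fun t ⟨ht, hft⟩ => ?_⟩
  exact hf.injOn (Set.Ioo_subset_Icc_self ht) (Set.Ioo_subset_Icc_self hs) (by linarith)

section ChordGeometry

variable {Ω : Set (EuclideanSpace ℝ (Fin 2))} {p v : EuclideanSpace ℝ (Fin 2)}

-- No hypotheses are needed: for an empty or unbounded set both sides are the junk value `0`.
open Pointwise in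
theorem exitTime_smul {t : ℝ} (ht : 0 < t) : exitTime Ω p (t • v) = exitTime Ω p v / t := by
  have hset : {u : ℝ | p + u • (t • v) ∈ Ω} = t⁻¹ • {s : ℝ | p + s • v ∈ Ω} := by
    ext u
    rw [Set.mem_smul_set_iff_inv_smul_mem₀ (inv_ne_zero ht.ne'), inv_inv]
    simp only [Set.mem_ofPred_eq, smul_smul, smul_eq_mul, mul_comm]
  rw [exitTime, hset, Real.sSup_smul_of_nonneg (inv_nonneg.mpr ht.le), smul_eq_mul,
    inv_mul_eq_div, exitTime]

theorem bddAbove_exitTime_set (hΩ : Bornology.IsBounded Ω) (hv : v ≠ 0) :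
    BddAbove {t : ℝ | p + t • v ∈ Ω} := by
  obtain ⟨R, hR⟩ := hΩ.subset_closedBall p
  refine ⟨R / ‖v‖, fun t ht => ?_⟩
  have hdist : ‖t • v‖ ≤ R := by simpa [dist_eq_norm] using hR ht
  rw [norm_smul, Real.norm_eq_abs] at hdist
  rw [le_div_iff₀ (norm_pos_iff.mpr hv)]
  exact (mul_le_mul_of_nonneg_right (le_abs_self t) (norm_nonneg v)).trans hdist

theorem exitTime_add_smul (hΩ : Bornology.IsBounded Ω) (hv : v ≠ 0) (hp : p ∈ Ω) (a : ℝ) :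
    exitTime Ω (p + a • v) v = exitTime Ω p v - a := by
  have hset : {u : ℝ | p + a • v + u • v ∈ Ω} =
      OrderIso.addRight (-a) '' {s : ℝ | p + s • v ∈ Ω} := by
    rw [show ⇑(OrderIso.addRight (-a)) = (· + -a) from rfl, Set.image_add_right, neg_neg]
    ext u
    simp only [Set.mem_ofPred_eq, Set.mem_preimage, add_smul, add_assoc, add_comm (a • v)]
  rw [exitTime, hset, ← OrderIso.map_csSup' _ ⟨0, by simpa using hp⟩
    (bddAbove_exitTime_set hΩ hv), OrderIso.addRight_apply, ← sub_eq_add_neg, exitTime]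

theorem chordEnd_add_smul (hΩ : Bornology.IsBounded Ω) (hv : v ≠ 0) (hp : p ∈ Ω) (a : ℝ)
    {t : ℝ} (ht : 0 < t) : chordEnd Ω (p + a • v) (t • v) = p + exitTime Ω p v • v := by
  rw [chordEnd, exitTime_smul ht, exitTime_add_smul hΩ hv hp, smul_smul,
    div_mul_cancel₀ _ ht.ne']
  module

theorem exitTime_pos (hΩ : Bornology.IsBounded Ω) (hv : v ≠ 0) (hp : p ∈ interior Ω) :
    0 < exitTime Ω p v := by
  have hnhds : ∀ᶠ t in 𝓝[>] (0 : ℝ), p + t • v ∈ Ω := by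
    refine nhdsWithin_le_nhds (Filter.Eventually.mono ?_ fun t ht => interior_subset ht)
    refine (isOpen_interior.preimage (by fun_prop)).mem_nhds ?_
    simpa using hp
  obtain ⟨t, htΩ, ht⟩ := (hnhds.and self_mem_nhdsWithin).exists
  exact (Set.mem_Ioi.1 ht).trans_le (le_csSup (bddAbove_exitTime_set hΩ hv) htΩ)

theorem one_lt_exitTime_sub {q : EuclideanSpace ℝ (Fin 2)} (hΩ : Bornology.IsBounded Ω)
    (hp : p ∈ Ω) (hq : q ∈ interior Ω) (hne : p ≠ q) : 1 < exitTime Ω p (q - p) := by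
  have hv : q - p ≠ 0 := sub_ne_zero.2 hne.symm
  have h := exitTime_add_smul hΩ hv hp 1
  rw [one_smul, add_sub_cancel] at h
  linarith [exitTime_pos hΩ hv hq]

theorem hilbertDist_add_smul (hΩ : Bornology.IsBounded Ω) (hv : v ≠ 0) (hp : p ∈ Ω) {a b : ℝ}
    (hlo : -exitTime Ω p (-v) < a) (hab : a < b) (hhi : b < exitTime Ω p v) :
    hilbertDist Ω (p + a • v) (p + b • v) =
      hilbertCoord (-exitTime Ω p (-v)) (exitTime Ω p v) b -
        hilbertCoord (-exitTime Ω p (-v)) (exitTime Ω p v) a := by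
  set lo := -exitTime Ω p (-v)
  set hi := exitTime Ω p v
  have hne : p + a • v ≠ p + b • v :=
    (add_right_injective p).ne ((smul_left_injective ℝ hv).ne hab.ne)
  have hback : chordEnd Ω (p + a • v) (p + a • v - (p + b • v)) = p + lo • v := by
    rw [show p + a • v - (p + b • v) = (b - a) • -v by module,
      show p + a • v = p + (-a) • -v by module,
      chordEnd_add_smul hΩ (neg_ne_zero.2 hv) hp _ (sub_pos.2 hab)]
    module
  have hfront : chordEnd Ω (p + b • v) (p + b • v - (p + a • v)) = p + hi • v := by
    rw [show p + b • v - (p + a • v) = (b - a) • v by module,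
      chordEnd_add_smul hΩ hv hp _ (sub_pos.2 hab)]
  have hnorm : ∀ x y : ℝ, ‖p + x • v - (p + y • v)‖ = |x - y| * ‖v‖ := fun x y => by
    rw [add_sub_add_left_eq_sub, ← sub_smul, norm_smul, Real.norm_eq_abs]
  have hvpos : 0 < ‖v‖ := norm_pos_iff.2 hv
  rw [hilbertDist, if_neg hne, hback, hfront, hnorm, hnorm, hnorm, hnorm,
    mul_div_mul_right _ _ hvpos.ne', mul_div_mul_right _ _ hvpos.ne',
    abs_of_pos (by linarith), abs_of_pos (by linarith), abs_of_neg (by linarith),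
    abs_of_neg (by linarith), hilbertCoord, hilbertCoord, ← mul_sub,
    ← Real.log_div (div_pos (by linarith) (by linarith)).ne'
      (div_pos (by linarith) (by linarith)).ne']
  congr 2
  rw [neg_sub, neg_sub, div_div_div_eq, div_mul_div_comm, mul_comm (hi - b)]

end ChordGeometry

/-- Existence and uniqueness of the Hilbert midpoint on the open
segment between two distinct interior points. -/
theorem hilbert_midpoint_existsUnique (Ω : Set (EuclideanSpace ℝ (Fin 2)))
    (hΩ : IsConvexBody Ω) (p q : EuclideanSpace ℝ (Fin 2))
    (hp : p ∈ interior Ω) (hq : q ∈ interior Ω) (hne : p ≠ q) :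
    ∃! c : EuclideanSpace ℝ (Fin 2),
      c ∈ openSegment ℝ p q ∧ hilbertDist Ω p c = hilbertDist Ω c q := by
  have hb := hΩ.1.isBounded
  have hv : q - p ≠ 0 := sub_ne_zero.2 hne.symm
  have hq' : p + (1 : ℝ) • (q - p) = q := by module
  set lo := -exitTime Ω p (-(q - p))
  set hi := exitTime Ω p (q - p)
  have hlo : lo < 0 := neg_neg_of_pos (exitTime_pos hb (neg_ne_zero.2 hv) hp)
  have hhi : 1 < hi := one_lt_exitTime_sub hb (interior_subset hp) hq hne
  have hdist : ∀ s ∈ Set.Ioo (0 : ℝ) 1,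
      hilbertDist Ω p (p + s • (q - p)) = hilbertCoord lo hi s - hilbertCoord lo hi 0 ∧
        hilbertDist Ω (p + s • (q - p)) q = hilbertCoord lo hi 1 - hilbertCoord lo hi s := by
    intro s hs
    constructor
    · simpa only [zero_smul, add_zero] using
        hilbertDist_add_smul hb hv (interior_subset hp) hlo hs.1 (hs.2.trans hhi)
    · simpa only [hq'] using
        hilbertDist_add_smul hb hv (interior_subset hp) (hlo.trans hs.1) hs.2 hhi
  have hIcc : Set.Icc (0 : ℝ) 1 ⊆ Set.Ioo lo hi := Set.Icc_subset_Ioo hlo hhi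
  obtain ⟨s, ⟨hs, hmid⟩, huniq⟩ :=
    ((strictMonoOn_hilbertCoord lo hi).mono hIcc).existsUnique_sub_eq_sub one_pos
      ((continuousOn_hilbertCoord lo hi).mono hIcc)
  rw [openSegment_eq_image']
  refine ⟨p + s • (q - p), ⟨⟨s, hs, rfl⟩, ?_⟩, ?_⟩
  · rw [(hdist s hs).1, (hdist s hs).2, hmid]
  · rintro _ ⟨⟨t, ht, rfl⟩, hteq⟩
    rw [(hdist t ht).1, (hdist t ht).2] at hteq
    rw [huniq t ⟨ht, hteq⟩]
end

section
/- Four points ⟨a,b,c,d⟩ in this order on a line have their cross ratio preserved by central projection: if two lines ℓ₁, ℓ₂ in the plane are given, v is a point not on either line, and a_i, b_i, c_i, d_i are the intersections of four concurrent lines through v with ℓ_i (i = 1,2), then (‖c₁−a₁‖/‖b₁−a₁‖)·(‖b₁−d₁‖/‖c₁−d₁‖) = (‖c₂−a₂‖/‖b₂−a₂‖)·(‖b₂−d₂‖/‖c₂−d₂‖). -/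
/-!
Fix an area form `ω` on the plane, nonzero on `(a₁ - v, b₁ - v)`. If the points of a line are
`x + s • u`, then `ω (x + s • u - v) (x + s' • u - v) = (s' - s) * ω (x - v) u`, so the
"pencil cross ratio" `ω(a,c) ω(d,b) / (ω(a,b) ω(d,c))` of the vectors from `v` to four points of
the line is the signed cross ratio of their parameters, whose absolute value is the metric
cross ratio. Central projection replaces each of these vectors by a nonzero multiple of itself,
and each vector occurs once in the numerator and once in the denominator, so the pencil cross
ratio is the same for both lines.
-/

open Module

section Field

variable {K E : Type*} [Field K] [AddCommGroup E] [Module K E]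

theorem linearIndependent_sub_of_not_collinear {v a b : E}
    (h : ¬Collinear K ({v, a, b} : Set E)) : LinearIndependent K ![a - v, b - v] := by
  rw [linearIndependent_fin2]
  refine ⟨fun hb => h ?_, fun c hc => h ?_⟩
  · simp [sub_eq_zero.mp hb, collinear_pair]
  · simp only [Matrix.cons_val_one, Matrix.cons_val_zero] at hc
    have ha : a ∈ line[K, v, b] := mem_affineSpan_pair_iff_exists_lineMap_eq.mpr
      ⟨c, by rw [AffineMap.lineMap_apply_module', hc, sub_add_cancel]⟩
    simpa [Set.insert_comm] using collinear_insert_of_mem_affineSpan_pair ha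

theorem Collinear.ne_of_not_collinear {s : Set E} (h : Collinear K s) {v a b p : E}
    (ha : a ∈ s) (hb : b ∈ s) (hp : p ∈ s) (hv : ¬Collinear K ({v, a, b} : Set E)) : p ≠ v := by
  rintro rfl
  exact hv (h.subset (by simp [Set.insert_subset_iff, ha, hb, hp]))

theorem Collinear.exists_sub_eq_smul_sub {v p q : E} (h : Collinear K ({v, p, q} : Set E))
    (hp : p ≠ v) (hq : q ≠ v) : ∃ α : K, α ≠ 0 ∧ q - v = α • (p - v) := by
  obtain ⟨α, hα⟩ := mem_affineSpan_pair_iff_exists_lineMap_eq.mp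
    (h.mem_affineSpan_of_mem_of_ne (p₃ := q) (by simp) (by simp) (by simp) hp.symm)
  rw [AffineMap.lineMap_apply_module'] at hα
  refine ⟨α, ?_, by rw [← hα]; abel⟩
  rintro rfl
  exact hq (by simpa using hα.symm)

theorem Collinear.exists_eq_add_smul_sub {a b c d : E} (h : Collinear K ({a, b, c, d} : Set E))
    (hab : a ≠ b) : ∃ t r : K, c = a + t • (b - a) ∧ d = a + r • (b - a) := by
  have hline : ∀ p ∈ ({a, b, c, d} : Set E), ∃ t : K, p = a + t • (b - a) := by
    intro p hp
    obtain ⟨t, ht⟩ := mem_affineSpan_pair_iff_exists_lineMap_eq.mp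
      (h.mem_affineSpan_of_mem_of_ne (by simp) (by simp) hp hab)
    exact ⟨t, by rw [← ht, AffineMap.lineMap_apply_module', add_comm]⟩
  obtain ⟨t, ht⟩ := hline c (by simp)
  obtain ⟨r, hr⟩ := hline d (by simp)
  exact ⟨t, r, ht, hr⟩

def crossRatio (a b c d : K) : K := (c - a) / (b - a) * ((b - d) / (c - d))

def pencilCrossRatio (ω : E →ₗ[K] E →ₗ[K] K) (x y z w : E) : K :=
  ω x z * ω w y / (ω x y * ω w z)

theorem LinearMap.IsAlt.apply_add_smul_add_smul {ω : E →ₗ[K] E →ₗ[K] K} (hω : ω.IsAlt)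
    (x u : E) (s t : K) : ω (x + s • u) (x + t • u) = (t - s) * ω x u := by
  have hux : ω u x = -ω x u := (hω.neg x u).symm
  simp only [map_add, map_smul, LinearMap.add_apply, LinearMap.smul_apply, smul_eq_mul,
    hω.self_eq_zero, hux]
  ring

theorem pencilCrossRatio_smul (ω : E →ₗ[K] E →ₗ[K] K) (x y z w : E) {α β γ δ : K}
    (hα : α ≠ 0) (hβ : β ≠ 0) (hγ : γ ≠ 0) (hδ : δ ≠ 0) :
    pencilCrossRatio ω (α • x) (β • y) (γ • z) (δ • w) = pencilCrossRatio ω x y z w := by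
  simp only [pencilCrossRatio, map_smul, LinearMap.smul_apply, smul_eq_mul]
  calc _ = (α * β * γ * δ) * (ω x z * ω w y) / ((α * β * γ * δ) * (ω x y * ω w z)) := by ring
    _ = _ := mul_div_mul_left _ _ (by simp [*])

theorem pencilCrossRatio_add_smul {ω : E →ₗ[K] E →ₗ[K] K} (hω : ω.IsAlt) {x u : E}
    (hxu : ω x u ≠ 0) (a b c d : K) :
    pencilCrossRatio ω (x + a • u) (x + b • u) (x + c • u) (x + d • u) = crossRatio a b c d := by
  simp only [pencilCrossRatio, crossRatio, hω.apply_add_smul_add_smul]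
  calc _ = (c - a) * (b - d) * (ω x u * ω x u) / ((b - a) * (c - d) * (ω x u * ω x u)) := by ring
    _ = _ := by rw [mul_div_mul_right _ _ (mul_ne_zero hxu hxu), mul_div_mul_comm]

theorem exists_isAlt_apply_ne_zero [FiniteDimensional K E] (hE : finrank K E = 2) {x y : E}
    (h : LinearIndependent K ![x, y]) : ∃ ω : E →ₗ[K] E →ₗ[K] K, ω.IsAlt ∧ ω x y ≠ 0 := by
  let e := basisOfLinearIndependentOfCardEqFinrank h (by simp [hE])
  let area (f g : E →ₗ[K] K) : E →ₗ[K] E →ₗ[K] K := (LinearMap.mul K K).compl₁₂ f g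
  refine ⟨area (e.coord 0) (e.coord 1) - area (e.coord 1) (e.coord 0), fun p => ?_, ?_⟩
  · simp [area, mul_comm]
  · have hx : e 0 = x := by simp [e]
    have hy : e 1 = y := by simp [e]
    simp [area, ← hx, ← hy]

end Field

section Normed

variable {E : Type*} [NormedAddCommGroup E] [NormedSpace ℝ E]

theorem abs_crossRatio_eq_norm {p u : E} (hu : u ≠ 0) (a b c d : ℝ) :
    |crossRatio a b c d| = ‖(p + c • u) - (p + a • u)‖ / ‖(p + b • u) - (p + a • u)‖ *
      (‖(p + b • u) - (p + d • u)‖ / ‖(p + c • u) - (p + d • u)‖) := by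
  have hu' : ‖u‖ ≠ 0 := norm_ne_zero_iff.mpr hu
  simp only [add_sub_add_left_eq_sub, ← sub_smul, norm_smul, Real.norm_eq_abs,
    mul_div_mul_right _ _ hu', crossRatio, abs_mul, abs_div]

theorem abs_pencilCrossRatio_of_collinear {ω : E →ₗ[ℝ] E →ₗ[ℝ] ℝ} (hω : ω.IsAlt)
    {v a b c d : E} (h : Collinear ℝ ({a, b, c, d} : Set E)) (hab : ω (a - v) (b - v) ≠ 0) :
    |pencilCrossRatio ω (a - v) (b - v) (c - v) (d - v)| =
      (‖c - a‖ / ‖b - a‖) * (‖b - d‖ / ‖c - d‖) := by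
  have hne : a ≠ b := by rintro rfl; exact hab (hω.self_eq_zero _)
  obtain ⟨t, r, rfl, rfl⟩ := h.exists_eq_add_smul_sub hne
  have hxu : ω (a - v) (b - a) ≠ 0 := by
    rwa [← sub_sub_sub_cancel_right b a v, map_sub, hω.self_eq_zero, sub_zero]
  have hu : b - a ≠ 0 := sub_ne_zero.mpr hne.symm
  have hpt (s : ℝ) : a + s • (b - a) - v = a - v + s • (b - a) := by abel
  calc |pencilCrossRatio ω (a - v) (b - v) (a + t • (b - a) - v) (a + r • (b - a) - v)|
      = |pencilCrossRatio ω (a - v + (0 : ℝ) • (b - a)) (a - v + (1 : ℝ) • (b - a))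
          (a - v + t • (b - a)) (a - v + r • (b - a))| := by
        rw [hpt, hpt, zero_smul, add_zero, one_smul, sub_add_sub_cancel']
    _ = |crossRatio 0 1 t r| := by rw [pencilCrossRatio_add_smul hω hxu]
    _ = _ := by
        rw [abs_crossRatio_eq_norm (p := a) hu, zero_smul, add_zero, one_smul, add_sub_cancel]

end Normed

theorem crossRatio_central_projection_general
    (v a₁ b₁ c₁ d₁ a₂ b₂ c₂ d₂ : EuclideanSpace ℝ (Fin 2))
    (hline₁ : Collinear ℝ ({a₁, b₁, c₁, d₁} : Set (EuclideanSpace ℝ (Fin 2))))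
    (hline₂ : Collinear ℝ ({a₂, b₂, c₂, d₂} : Set (EuclideanSpace ℝ (Fin 2))))
    (hva : Collinear ℝ ({v, a₁, a₂} : Set (EuclideanSpace ℝ (Fin 2))))
    (hvb : Collinear ℝ ({v, b₁, b₂} : Set (EuclideanSpace ℝ (Fin 2))))
    (hvc : Collinear ℝ ({v, c₁, c₂} : Set (EuclideanSpace ℝ (Fin 2))))
    (hvd : Collinear ℝ ({v, d₁, d₂} : Set (EuclideanSpace ℝ (Fin 2))))
    (hv₁ : ¬ Collinear ℝ ({v, a₁, b₁} : Set (EuclideanSpace ℝ (Fin 2))))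
    (hv₂ : ¬ Collinear ℝ ({v, a₂, b₂} : Set (EuclideanSpace ℝ (Fin 2)))) :
    (‖c₁ - a₁‖ / ‖b₁ - a₁‖) * (‖b₁ - d₁‖ / ‖c₁ - d₁‖) =
      (‖c₂ - a₂‖ / ‖b₂ - a₂‖) * (‖b₂ - d₂‖ / ‖c₂ - d₂‖) := by
  obtain ⟨ω, hω, hω₁⟩ := exists_isAlt_apply_ne_zero finrank_euclideanSpace_fin
    (linearIndependent_sub_of_not_collinear hv₁)
  have off₁ {p} (hp : p ∈ ({a₁, b₁, c₁, d₁} : Set _)) : p ≠ v :=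
    hline₁.ne_of_not_collinear (by simp) (by simp) hp hv₁
  have off₂ {p} (hp : p ∈ ({a₂, b₂, c₂, d₂} : Set _)) : p ≠ v :=
    hline₂.ne_of_not_collinear (by simp) (by simp) hp hv₂
  obtain ⟨α, hα, ha⟩ := hva.exists_sub_eq_smul_sub (off₁ (by simp)) (off₂ (by simp))
  obtain ⟨β, hβ, hb⟩ := hvb.exists_sub_eq_smul_sub (off₁ (by simp)) (off₂ (by simp))
  obtain ⟨γ, hγ, hc⟩ := hvc.exists_sub_eq_smul_sub (off₁ (by simp)) (off₂ (by simp))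
  obtain ⟨δ, hδ, hd⟩ := hvd.exists_sub_eq_smul_sub (off₁ (by simp)) (off₂ (by simp))
  have hω₂ : ω (a₂ - v) (b₂ - v) ≠ 0 := by simpa [ha, hb, hα, hβ] using hω₁
  rw [← abs_pencilCrossRatio_of_collinear hω hline₁ hω₁,
    ← abs_pencilCrossRatio_of_collinear hω hline₂ hω₂, ha, hb, hc, hd,
    pencilCrossRatio_smul _ _ _ _ _ hα hβ hγ hδ]

/-- The cross ratio of four points in order on a line is preserved by
central projection from a point `v` onto another line. -/
theorem crossRatio_central_projection
    (v a₁ b₁ c₁ d₁ a₂ b₂ c₂ d₂ : EuclideanSpace ℝ (Fin 2))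
    (hline₁ : Collinear ℝ ({a₁, b₁, c₁, d₁} : Set (EuclideanSpace ℝ (Fin 2))))
    (hline₂ : Collinear ℝ ({a₂, b₂, c₂, d₂} : Set (EuclideanSpace ℝ (Fin 2))))
    (hord₁ : Sbtw ℝ a₁ b₁ c₁ ∧ Sbtw ℝ b₁ c₁ d₁)
    (hord₂ : Sbtw ℝ a₂ b₂ c₂ ∧ Sbtw ℝ b₂ c₂ d₂)
    (hva : Collinear ℝ ({v, a₁, a₂} : Set (EuclideanSpace ℝ (Fin 2))))
    (hvb : Collinear ℝ ({v, b₁, b₂} : Set (EuclideanSpace ℝ (Fin 2))))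
    (hvc : Collinear ℝ ({v, c₁, c₂} : Set (EuclideanSpace ℝ (Fin 2))))
    (hvd : Collinear ℝ ({v, d₁, d₂} : Set (EuclideanSpace ℝ (Fin 2))))
    (hv₁ : ¬ Collinear ℝ ({v, a₁, b₁} : Set (EuclideanSpace ℝ (Fin 2))))
    (hv₂ : ¬ Collinear ℝ ({v, a₂, b₂} : Set (EuclideanSpace ℝ (Fin 2)))) :
    (‖c₁ - a₁‖ / ‖b₁ - a₁‖) * (‖b₁ - d₁‖ / ‖c₁ - d₁‖) =
      (‖c₂ - a₂‖ / ‖b₂ - a₂‖) * (‖b₂ - d₂‖ / ‖c₂ - d₂‖) :=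
  crossRatio_central_projection_general v a₁ b₁ c₁ d₁ a₂ b₂ c₂ d₂ hline₁ hline₂ hva hvb hvc hvd hv₁
    hv₂
end

section
/- Equidistance characterization via concurrency: let Ω be a convex body, p, q ∈ int(Ω), and x ∈ int(Ω) not on line pq. Let p', p'' be the endpoints of the chord through p and x ordered ⟨p', p, x, p''⟩, and q', q'' the endpoints of the chord through q and x ordered ⟨q', q, x, q''⟩. If the three lines through {p,q}, {p',q'}, and {p'',q''} pass through a common point, then d_Ω(p,x) = d_Ω(q,x). -/
open Filter Topology
open scoped Classical

lemma chordEnd_eq_of_frontier {Ω : Set (EuclideanSpace ℝ (Fin 2))}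
    (hconv : Convex ℝ Ω) (hcl : IsClosed Ω)
    {p y v : EuclideanSpace ℝ (Fin 2)} (hp : p ∈ interior Ω) (hy : y ∈ frontier Ω)
    {s : ℝ} (hs : 0 < s) (hyv : y = p + s • v) : chordEnd Ω p v = y := by
  have hyΩ : y ∈ Ω := hcl.frontier_subset hy
  have hyni : y ∉ interior Ω := hy.2
  have hub : ∀ t ∈ {t : ℝ | p + t • v ∈ Ω}, t ≤ s := by
    intro t ht
    by_contra hts
    push_neg at hts
    have ht0 : (0:ℝ) < t := hs.trans hts
    have hz : p + t • v ∈ closure Ω := subset_closure ht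
    have hmem : y ∈ openSegment ℝ p (p + t • v) := by
      refine ⟨1 - s / t, s / t, by
        rw [sub_pos]
        exact (div_lt_one ht0).2 hts, by positivity, by ring, ?_⟩
      rw [hyv, smul_add, smul_smul, div_mul_cancel₀ _ ht0.ne']
      module
    exact hyni (hconv.openSegment_interior_closure_subset_interior hp hz hmem)
  have hmem : s ∈ {t : ℝ | p + t • v ∈ Ω} := by
    simp only [Set.mem_setOf_eq, ← hyv]
    exact hyΩ
  have hex : exitTime Ω p v = s :=
    le_antisymm (csSup_le ⟨s, hmem⟩ hub) (le_csSup ⟨s, hub⟩ hmem)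
  rw [chordEnd, hex, ← hyv]

lemma collinear_param {a b w : EuclideanSpace ℝ (Fin 2)} (hab : a ≠ b)
    (h : Collinear ℝ ({a, b, w} : Set (EuclideanSpace ℝ (Fin 2)))) :
    ∃ t : ℝ, w - a = t • (b - a) := by
  rw [collinear_iff_of_mem (Set.mem_insert a _)] at h
  obtain ⟨v₀, hv⟩ := h
  obtain ⟨rb, hb⟩ := hv b (by simp)
  obtain ⟨rw', hw⟩ := hv w (by simp)
  have hb' : b - a = rb • v₀ := by rw [hb]; simp
  have hw' : w - a = rw' • v₀ := by rw [hw]; simp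
  have hrb : rb ≠ 0 := by
    rintro rfl
    apply hab
    rw [hb]; simp
  refine ⟨rw' / rb, ?_⟩
  rw [hw', hb', smul_smul, div_mul_cancel₀ _ hrb]

/-- Concurrency of the three lines through `{p,q}`, `{p',q'}`, `{p'',q''}`
implies that `x` is Hilbert-equidistant from `p` and `q`. -/
theorem hilbertDist_eq_of_concurrent (Ω : Set (EuclideanSpace ℝ (Fin 2)))
    (hΩ : IsConvexBody Ω) (p q x : EuclideanSpace ℝ (Fin 2))
    (hp : p ∈ interior Ω) (hq : q ∈ interior Ω) (hx : x ∈ interior Ω)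
    (hnc : ¬ Collinear ℝ ({p, q, x} : Set (EuclideanSpace ℝ (Fin 2))))
    (p' p'' q' q'' : EuclideanSpace ℝ (Fin 2))
    (hp' : p' ∈ frontier Ω) (hp'' : p'' ∈ frontier Ω)
    (hq' : q' ∈ frontier Ω) (hq'' : q'' ∈ frontier Ω)
    (hordp : Sbtw ℝ p' p x ∧ Sbtw ℝ p x p'')
    (hordq : Sbtw ℝ q' q x ∧ Sbtw ℝ q x q'')
    (hconc : ∃ w : EuclideanSpace ℝ (Fin 2),
      Collinear ℝ ({p, q, w} : Set (EuclideanSpace ℝ (Fin 2))) ∧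
      Collinear ℝ ({p', q', w} : Set (EuclideanSpace ℝ (Fin 2))) ∧
      Collinear ℝ ({p'', q'', w} : Set (EuclideanSpace ℝ (Fin 2)))) :
    hilbertDist Ω p x = hilbertDist Ω q x := by
  obtain ⟨hcomp, hconv, -⟩ := hΩ
  have hcl : IsClosed Ω := hcomp.isClosed
  -- nondegeneracies
  have hpx : p ≠ x := by
    rintro rfl
    exact hnc (Collinear.subset (by intro y hy; simp at hy ⊢; tauto) (collinear_pair ℝ p q))
  have hqx : q ≠ x := by
    rintro rfl
    exact hnc (Collinear.subset (by intro y hy; simp at hy ⊢; tauto) (collinear_pair ℝ p q))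
  have hpq : p ≠ q := by
    rintro rfl
    exact hnc (Collinear.subset (by intro y hy; simp at hy ⊢; tauto) (collinear_pair ℝ p x))
  -- linear independence of p - x and q - x
  have haux : ∀ a b : ℝ, a • (p - x) = b • (q - x) → a = 0 ∧ b = 0 := by
    intro a b hab
    by_cases ha : a = 0
    · subst ha
      refine ⟨rfl, ?_⟩
      by_contra hb
      have h0 : b • (q - x) = 0 := by rw [← hab, zero_smul]
      have hqx2 : q - x = 0 := by
        rcases smul_eq_zero.mp h0 with h | h
        · exact absurd h hb
        · exact h
      rw [sub_eq_zero] at hqx2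
      apply hnc
      rw [← hqx2]
      exact Collinear.subset (by intro y hy; simp at hy ⊢; tauto) (collinear_pair ℝ p q)
    · exfalso
      apply hnc
      rw [collinear_iff_of_mem (show x ∈ ({p, q, x} : Set (EuclideanSpace ℝ (Fin 2))) by simp)]
      refine ⟨q - x, fun y hy => ?_⟩
      simp only [Set.mem_insert_iff, Set.mem_singleton_iff] at hy
      rcases hy with rfl | rfl | rfl
      · exact ⟨b / a, by
          rw [div_eq_inv_mul, mul_smul, ← hab, inv_smul_smul₀ ha, vadd_eq_add]; abel⟩
      · exact ⟨1, by rw [one_smul, vadd_eq_add]; abel⟩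
      · exact ⟨0, by rw [zero_smul, vadd_eq_add]; abel⟩
  -- parametrize the chord endpoints
  obtain ⟨α, hα, hp'x⟩ : ∃ α : ℝ, 1 < α ∧ p' - x = α • (p - x) := by
    obtain ⟨t, ht, hteq⟩ := hordp.1.mem_image_Ioo
    have h2 : p - x = (1 - t) • (p' - x) := by
      rw [← hteq, AffineMap.lineMap_apply]
      simp only [vsub_eq_sub, vadd_eq_add]
      module
    have h1t : (0:ℝ) < 1 - t := by linarith [ht.2]
    refine ⟨(1 - t)⁻¹, ?_, ?_⟩
    · rw [lt_inv_comm₀ one_pos h1t]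
      simp only [inv_one]
      linarith [ht.1]
    · rw [h2, inv_smul_smul₀ h1t.ne']
  obtain ⟨β, hβ, hp''x⟩ : ∃ β : ℝ, 0 < β ∧ p'' - x = -(β • (p - x)) := by
    obtain ⟨t, ht, hteq⟩ := hordp.2.mem_image_Ioo
    have h2 : x - p = t • (p'' - p) := by
      rw [← hteq, AffineMap.lineMap_apply]
      simp only [vsub_eq_sub, vadd_eq_add]
      module
    have hppp : p'' - p = t⁻¹ • (x - p) := by rw [h2, inv_smul_smul₀ ht.1.ne']
    have h1t : 1 < t⁻¹ := by
      rw [lt_inv_comm₀ one_pos ht.1]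
      simp only [inv_one]
      exact ht.2
    refine ⟨t⁻¹ - 1, by linarith, ?_⟩
    have h3 : p'' = t⁻¹ • (x - p) + p := by rw [← hppp]; abel
    rw [h3]; module
  obtain ⟨γ, hγ, hq'x⟩ : ∃ γ : ℝ, 1 < γ ∧ q' - x = γ • (q - x) := by
    obtain ⟨t, ht, hteq⟩ := hordq.1.mem_image_Ioo
    have h2 : q - x = (1 - t) • (q' - x) := by
      rw [← hteq, AffineMap.lineMap_apply]
      simp only [vsub_eq_sub, vadd_eq_add]
      module
    have h1t : (0:ℝ) < 1 - t := by linarith [ht.2]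
    refine ⟨(1 - t)⁻¹, ?_, ?_⟩
    · rw [lt_inv_comm₀ one_pos h1t]
      simp only [inv_one]
      linarith [ht.1]
    · rw [h2, inv_smul_smul₀ h1t.ne']
  obtain ⟨δ, hδ, hq''x⟩ : ∃ δ : ℝ, 0 < δ ∧ q'' - x = -(δ • (q - x)) := by
    obtain ⟨t, ht, hteq⟩ := hordq.2.mem_image_Ioo
    have h2 : x - q = t • (q'' - q) := by
      rw [← hteq, AffineMap.lineMap_apply]
      simp only [vsub_eq_sub, vadd_eq_add]
      module
    have hppp : q'' - q = t⁻¹ • (x - q) := by rw [h2, inv_smul_smul₀ ht.1.ne']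
    have h1t : 1 < t⁻¹ := by
      rw [lt_inv_comm₀ one_pos ht.1]
      simp only [inv_one]
      exact ht.2
    refine ⟨t⁻¹ - 1, by linarith, ?_⟩
    have h3 : q'' = t⁻¹ • (x - q) + q := by rw [← hppp]; abel
    rw [h3]; module
  -- identify the chord endpoints with the given points
  have hce1 : chordEnd Ω p (p - x) = p' := by
    refine chordEnd_eq_of_frontier hconv hcl hp hp' (s := α - 1) (by linarith) ?_
    have h0 := hp'x
    rw [sub_eq_iff_eq_add] at h0
    rw [h0]; module
  have hce2 : chordEnd Ω x (x - p) = p'' := by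
    refine chordEnd_eq_of_frontier hconv hcl hx hp'' (s := β) hβ ?_
    have h0 := hp''x
    rw [sub_eq_iff_eq_add] at h0
    rw [h0]; module
  have hce3 : chordEnd Ω q (q - x) = q' := by
    refine chordEnd_eq_of_frontier hconv hcl hq hq' (s := γ - 1) (by linarith) ?_
    have h0 := hq'x
    rw [sub_eq_iff_eq_add] at h0
    rw [h0]; module
  have hce4 : chordEnd Ω x (x - q) = q'' := by
    refine chordEnd_eq_of_frontier hconv hcl hx hq'' (s := δ) hδ ?_
    have h0 := hq''x
    rw [sub_eq_iff_eq_add] at h0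
    rw [h0]; module
  -- concurrency gives scalar relations
  obtain ⟨w, hw1, hw2, hw3⟩ := hconc
  have hp'q' : p' ≠ q' := by
    intro h
    have : α • (p - x) = γ • (q - x) := by
      rw [← hp'x, ← hq'x, h]
    exact absurd (haux _ _ this).1 (by linarith)
  have hp''q'' : p'' ≠ q'' := by
    intro h
    have : β • (p - x) = δ • (q - x) := by
      have h2 : -(β • (p - x)) = -(δ • (q - x)) := by rw [← hp''x, ← hq''x, h]
      exact neg_injective h2
    exact absurd (haux _ _ this).1 (by linarith)
  obtain ⟨t, hwt⟩ := collinear_param hpq hw1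
  obtain ⟨s, hws⟩ := collinear_param hp'q' hw2
  obtain ⟨r, hwr⟩ := collinear_param hp''q'' hw3
  have rep1 : w - x = (1 - t) • (p - x) + t • (q - x) := by
    have h : w - x = t • (q - p) + (p - x) := by rw [← hwt]; abel
    rw [h]; module
  have rep2 : w - x = ((1 - s) * α) • (p - x) + (s * γ) • (q - x) := by
    have h : w - x = s • (q' - p') + (p' - x) := by rw [← hws]; abel
    have h2 : q' - p' = γ • (q - x) - α • (p - x) := by
      have h3 : q' - p' = (q' - x) - (p' - x) := by abel
      rw [h3, hp'x, hq'x]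
    rw [h, h2, hp'x]; module
  have rep3 : w - x = ((r - 1) * β) • (p - x) + (-(r * δ)) • (q - x) := by
    have h : w - x = r • (q'' - p'') + (p'' - x) := by rw [← hwr]; abel
    have h2 : q'' - p'' = β • (p - x) - δ • (q - x) := by
      have h3 : q'' - p'' = (q'' - x) - (p'' - x) := by abel
      rw [h3, hp''x, hq''x]; module
    rw [h, h2, hp''x]; module
  have e12 : ((1 - t) - (1 - s) * α) • (p - x) = (s * γ - t) • (q - x) := by
    have h := rep1.symm.trans rep2
    linear_combination (norm := module) h
  have e13 : ((1 - t) - (r - 1) * β) • (p - x) = (-(r * δ) - t) • (q - x) := by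
    have h := rep1.symm.trans rep3
    linear_combination (norm := module) h
  obtain ⟨h1, h2⟩ := haux _ _ e12
  obtain ⟨h3, h4⟩ := haux _ _ e13
  have hA1 : 1 - t = (1 - s) * α := by linarith
  have hA2 : t = s * γ := by linarith
  have hA3 : 1 - t = (r - 1) * β := by linarith
  have hA4 : t = -(r * δ) := by linarith
  have key : α * δ * (1 + β) * (γ - 1) = β * γ * (1 + δ) * (α - 1) := by
    linear_combination (β - δ) * γ * hA1 + (β - δ) * α * hA2 + (γ - α) * δ * hA3 +
      (γ - α) * β * hA4
  -- norms
  have hup : (0:ℝ) < ‖p - x‖ := by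
    rw [norm_pos_iff]
    exact sub_ne_zero.2 hpx
  have huq : (0:ℝ) < ‖q - x‖ := by
    rw [norm_pos_iff]
    exact sub_ne_zero.2 hqx
  have n1 : ‖x - p'‖ = α * ‖p - x‖ := by
    have e : x - p' = -(α • (p - x)) := by rw [← hp'x]; abel
    rw [e, norm_neg, norm_smul, Real.norm_eq_abs, abs_of_pos (by linarith)]
  have n2 : ‖p - p'‖ = (α - 1) * ‖p - x‖ := by
    have e : p - p' = (1 - α) • (p - x) := by
      rw [sub_smul, one_smul, ← hp'x]; abel
    rw [e, norm_smul, Real.norm_eq_abs, abs_of_neg (by linarith), neg_sub]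
  have n3 : ‖p - p''‖ = (1 + β) * ‖p - x‖ := by
    have e : p - p'' = (1 + β) • (p - x) := by
      rw [add_smul, one_smul, ← sub_neg_eq_add, ← hp''x]; abel
    rw [e, norm_smul, Real.norm_eq_abs, abs_of_pos (by linarith)]
  have n4 : ‖x - p''‖ = β * ‖p - x‖ := by
    have e : x - p'' = β • (p - x) := by
      rw [← neg_neg (β • (p - x)), ← hp''x]; abel
    rw [e, norm_smul, Real.norm_eq_abs, abs_of_pos hβ]
  have n5 : ‖x - q'‖ = γ * ‖q - x‖ := by
    have e : x - q' = -(γ • (q - x)) := by rw [← hq'x]; abel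
    rw [e, norm_neg, norm_smul, Real.norm_eq_abs, abs_of_pos (by linarith)]
  have n6 : ‖q - q'‖ = (γ - 1) * ‖q - x‖ := by
    have e : q - q' = (1 - γ) • (q - x) := by
      rw [sub_smul, one_smul, ← hq'x]; abel
    rw [e, norm_smul, Real.norm_eq_abs, abs_of_neg (by linarith), neg_sub]
  have n7 : ‖q - q''‖ = (1 + δ) * ‖q - x‖ := by
    have e : q - q'' = (1 + δ) • (q - x) := by
      rw [add_smul, one_smul, ← sub_neg_eq_add, ← hq''x]; abel
    rw [e, norm_smul, Real.norm_eq_abs, abs_of_pos (by linarith)]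
  have n8 : ‖x - q''‖ = δ * ‖q - x‖ := by
    have e : x - q'' = δ • (q - x) := by
      rw [← neg_neg (δ • (q - x)), ← hq''x]; abel
    rw [e, norm_smul, Real.norm_eq_abs, abs_of_pos hδ]
  simp only [hilbertDist, if_neg hpx, if_neg hqx, hce1, hce2, hce3, hce4,
    n1, n2, n3, n4, n5, n6, n7, n8]
  congr 1
  congr 1
  rw [mul_div_mul_right _ _ hup.ne', mul_div_mul_right _ _ hup.ne',
    mul_div_mul_right _ _ huq.ne', mul_div_mul_right _ _ huq.ne',
    div_mul_div_comm, div_mul_div_comm,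
    div_eq_div_iff (mul_pos (by linarith : (0:ℝ) < α - 1) hβ).ne' (mul_pos (by linarith : (0:ℝ) < γ - 1) hδ).ne']
  linear_combination key
end

section
/- Star-shapedness of Hilbert Voronoi cells: let P be a finite set of sites in int(Ω) and p ∈ P. If x ∈ int(Ω) satisfies d_Ω(p,x) ≤ d_Ω(p',x) for all p' ∈ P, then every point y on the segment from p to x also satisfies d_Ω(p,y) ≤ d_Ω(p',y) for all p' ∈ P. -/
open Filter Topology
open scoped Classical

section Aux

local notation "E" => EuclideanSpace ℝ (Fin 2)

/-- Basic properties of the exit time from an interior point. -/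
lemma exitTime_spec {Ω : Set E} (hΩ : IsConvexBody Ω) {q v : E}
    (hq : q ∈ interior Ω) (hv : v ≠ 0) :
    0 < exitTime Ω q v ∧ chordEnd Ω q v ∈ Ω ∧ chordEnd Ω q v ∉ interior Ω := by
  obtain ⟨hcomp, hconv, -⟩ := hΩ
  have hvn : (0:ℝ) < ‖v‖ := norm_pos_iff.mpr hv
  have hS0 : (0:ℝ) ∈ {t : ℝ | q + t • v ∈ Ω} := by
    simp only [Set.mem_setOf_eq, zero_smul, add_zero]
    exact interior_subset hq
  have hne : Set.Nonempty {t : ℝ | q + t • v ∈ Ω} := ⟨0, hS0⟩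
  obtain ⟨R, hR⟩ := hcomp.isBounded.subset_closedBall 0
  have hbdd : BddAbove {t : ℝ | q + t • v ∈ Ω} := by
    refine ⟨(R + ‖q‖) / ‖v‖, fun t ht => ?_⟩
    have h1 : ‖q + t • v‖ ≤ R := by
      simpa [Metric.mem_closedBall, dist_zero_right] using hR ht
    have h2 : ‖t • v‖ ≤ R + ‖q‖ := by
      have h3 : ‖(q + t • v) - q‖ ≤ ‖q + t • v‖ + ‖q‖ := norm_sub_le _ _
      have h4 : (q + t • v) - q = t • v := by abel
      rw [h4] at h3
      linarith
    rw [norm_smul, Real.norm_eq_abs] at h2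
    rw [le_div_iff₀ hvn]
    calc t * ‖v‖ ≤ |t| * ‖v‖ := by
          have := le_abs_self t
          nlinarith [norm_nonneg v]
      _ ≤ R + ‖q‖ := h2
  have key : ∀ w : E, w ∈ interior Ω → ∀ s : ℝ, q + s • v = w →
      ∃ δ > 0, (s + δ) ∈ {t : ℝ | q + t • v ∈ Ω} := by
    intro w hw s hsw
    obtain ⟨ε, hε, hsub⟩ := Metric.isOpen_iff.mp isOpen_interior w hw
    refine ⟨ε / (2 * ‖v‖), by positivity, ?_⟩
    have hmem : q + (s + ε / (2 * ‖v‖)) • v ∈ Metric.ball w ε := by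
      have hdiff : q + (s + ε / (2 * ‖v‖)) • v - w = (ε / (2 * ‖v‖)) • v := by
        rw [← hsw]; module
      rw [Metric.mem_ball, dist_eq_norm, hdiff, norm_smul, Real.norm_eq_abs,
        abs_of_pos (by positivity)]
      have : ε / (2 * ‖v‖) * ‖v‖ = ε / 2 := by field_simp
      rw [this]; linarith
    exact Set.mem_setOf_eq ▸ interior_subset (hsub hmem)
  have hpos : 0 < exitTime Ω q v := by
    obtain ⟨δ, hδ, hmem⟩ := key q hq 0 (by simp)
    have := le_csSup hbdd hmem
    have h0δ : (0:ℝ) + δ = δ := by ring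
    rw [h0δ] at this
    calc (0:ℝ) < δ := hδ
      _ ≤ exitTime Ω q v := this
  have hclosed : IsClosed {t : ℝ | q + t • v ∈ Ω} := by
    have : {t : ℝ | q + t • v ∈ Ω} = (fun t : ℝ => q + t • v) ⁻¹' Ω := rfl
    rw [this]
    exact IsClosed.preimage (by continuity) hcomp.isClosed
  have hmemT : exitTime Ω q v ∈ {t : ℝ | q + t • v ∈ Ω} :=
    hclosed.csSup_mem hne hbdd
  refine ⟨hpos, hmemT, ?_⟩
  intro hint
  obtain ⟨δ, hδ, hmem⟩ := key (chordEnd Ω q v) hint (exitTime Ω q v) rfl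
  have := le_csSup hbdd hmem
  have h2 : exitTime Ω q v + δ ≤ exitTime Ω q v := this
  linarith

/-- Uniqueness of the exit time: any positive parameter landing in `Ω` but not in
its interior is the exit time. -/
lemma exitTime_eq_s15 {Ω : Set E} (hconv : Convex ℝ Ω) {q v : E} (hq : q ∈ interior Ω)
    {t : ℝ} (ht : 0 < t) (h1 : q + t • v ∈ Ω) (h2 : q + t • v ∉ interior Ω) :
    exitTime Ω q v = t := by
  have hub : ∀ s ∈ {t : ℝ | q + t • v ∈ Ω}, s ≤ t := by
    intro s hs
    by_contra hst
    push_neg at hst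
    have hs0 : 0 < s := lt_trans ht hst
    apply h2
    have hts : t / s < 1 := (div_lt_one hs0).mpr hst
    have hcombo := hconv.combo_interior_closure_mem_interior hq
      (subset_closure hs) (a := 1 - t / s) (b := t / s)
      (by linarith) (by positivity) (by ring)
    have hid : (1 - t / s) • q + (t / s) • (q + s • v) = q + t • v := by
      rw [smul_add, smul_smul, div_mul_cancel₀ _ (ne_of_gt hs0)]
      module
    rwa [hid] at hcombo
  apply le_antisymm
  · exact csSup_le ⟨0, by simpa using interior_subset hq⟩ hub
  · exact le_csSup ⟨t, hub⟩ h1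

/-- The one-sided Hilbert ratio: `‖x - b‖ / ‖y - b‖` where `b` is the boundary point
of `Ω` on the ray from `x` through `y`, beyond `y`. -/
noncomputable def Gr (Ω : Set E) (x y : E) : ℝ :=
  if x = y then 1
  else ‖x - chordEnd Ω y (y - x)‖ / ‖y - chordEnd Ω y (y - x)‖

lemma hilbertDist_eq_Gr (Ω : Set E) (p q : E) :
    hilbertDist Ω p q = 1 / 2 * Real.log (Gr Ω q p * Gr Ω p q) := by
  by_cases h : p = q
  · subst h; simp [hilbertDist, Gr]
  · simp [hilbertDist, Gr, h, Ne.symm h]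

lemma Gr_eq_ratio {Ω : Set E} (hΩ : IsConvexBody Ω) {x y : E}
    (hy : y ∈ interior Ω) (hxy : x ≠ y) :
    Gr Ω x y = (1 + exitTime Ω y (y - x)) / exitTime Ω y (y - x) := by
  have hv : y - x ≠ 0 := sub_ne_zero.mpr (Ne.symm hxy)
  obtain ⟨hT, -, -⟩ := exitTime_spec hΩ hy hv
  have hx' : x - chordEnd Ω y (y - x) = -((1 + exitTime Ω y (y - x)) • (y - x)) := by
    unfold chordEnd; module
  have hy' : y - chordEnd Ω y (y - x) = -(exitTime Ω y (y - x) • (y - x)) := by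
    unfold chordEnd; module
  rw [Gr, if_neg hxy, hx', hy', norm_neg, norm_neg, norm_smul, norm_smul,
    Real.norm_eq_abs, Real.norm_eq_abs, abs_of_pos hT,
    abs_of_pos (by linarith : (0:ℝ) < 1 + exitTime Ω y (y - x)),
    mul_div_mul_right _ _ (norm_ne_zero_iff.mpr hv)]

lemma Gr_pos {Ω : Set E} (hΩ : IsConvexBody Ω) {x y : E}
    (hy : y ∈ interior Ω) : 0 < Gr Ω x y := by
  by_cases h : x = y
  · simp [Gr, h]
  · obtain ⟨hT, -, -⟩ := exitTime_spec hΩ hy (sub_ne_zero.mpr (Ne.symm h))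
    rw [Gr_eq_ratio hΩ hy h]
    exact div_pos (by linarith) hT

lemma Gr_one_le {Ω : Set E} (hΩ : IsConvexBody Ω) {x y : E}
    (hy : y ∈ interior Ω) : 1 ≤ Gr Ω x y := by
  by_cases h : x = y
  · simp [Gr, h]
  · obtain ⟨hT, -, -⟩ := exitTime_spec hΩ hy (sub_ne_zero.mpr (Ne.symm h))
    rw [Gr_eq_ratio hΩ hy h, le_div_iff₀ hT]
    linarith

/-- Halfspace bound: if `Ω ⊆ {f ≤ c}` then `c - f x ≤ Gr Ω x y * (c - f y)`. -/
lemma Gr_halfspace {Ω : Set E} (hΩ : IsConvexBody Ω) {x y : E}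
    (hy : y ∈ interior Ω) (hxy : x ≠ y) (f : E →L[ℝ] ℝ) (c : ℝ)
    (hH : ∀ w ∈ Ω, f w ≤ c) :
    c - f x ≤ Gr Ω x y * (c - f y) := by
  have hv : y - x ≠ 0 := sub_ne_zero.mpr (Ne.symm hxy)
  obtain ⟨hT, hbΩ, -⟩ := exitTime_spec hΩ hy hv
  have hfb : f y + exitTime Ω y (y - x) * f (y - x) ≤ c := by
    have h := hH _ hbΩ
    unfold chordEnd at h
    simpa [map_add, map_smul, smul_eq_mul] using h
  have hfx : f x = f y - f (y - x) := by rw [map_sub]; ring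
  rw [Gr_eq_ratio hΩ hy hxy, div_mul_eq_mul_div, le_div_iff₀ hT, hfx]
  nlinarith [hfb, hT]

/-- Multiplicative triangle inequality for the one-sided Hilbert ratio. -/
lemma Gr_triangle {Ω : Set E} (hΩ : IsConvexBody Ω) {x y z : E}
    (hx : x ∈ interior Ω) (hy : y ∈ interior Ω) (hz : z ∈ interior Ω) :
    Gr Ω x z ≤ Gr Ω x y * Gr Ω y z := by
  by_cases hxy : x = y
  · subst hxy
    have : Gr Ω x x = 1 := by simp [Gr]
    rw [this, one_mul]
  by_cases hyz : y = z
  · subst hyz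
    have : Gr Ω y y = 1 := by simp [Gr]
    rw [this, mul_one]
  by_cases hxz : x = z
  · subst hxz
    have h0 : Gr Ω x x = 1 := by simp [Gr]
    rw [h0]
    nlinarith [Gr_one_le hΩ hy (x := x), Gr_one_le hΩ hx (x := y),
      Gr_pos hΩ hy (x := x)]
  -- main case
  have hv : z - x ≠ 0 := sub_ne_zero.mpr (Ne.symm hxz)
  obtain ⟨hT, hbΩ, hbni⟩ := exitTime_spec hΩ hz hv
  obtain ⟨f, hf⟩ := geometric_hahn_banach_open_point (hΩ.2.1.interior) isOpen_interior hbni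
  set b : E := chordEnd Ω z (z - x) with hbdef
  set c : ℝ := f b with hcdef
  have hH : ∀ w ∈ Ω, f w ≤ c := by
    intro w hw
    obtain ⟨q0, hq0⟩ := hΩ.2.2
    have hcont : Continuous fun s : ℝ => f ((1 - s) • q0 + s • w) := by fun_prop
    have hlim : Tendsto (fun s : ℝ => f ((1 - s) • q0 + s • w)) (𝓝[<] (1:ℝ)) (𝓝 (f w)) := by
      have h1 : f ((1 - (1:ℝ)) • q0 + (1:ℝ) • w) = f w := by norm_num
      simpa [h1] using (hcont.tendsto 1).mono_left nhdsWithin_le_nhds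
    refine le_of_tendsto hlim ?_
    filter_upwards [Ioo_mem_nhdsLT_of_mem
      (Set.mem_Ioc.mpr ⟨zero_lt_one, le_refl (1:ℝ)⟩)] with s hs
    exact (hf _ (hΩ.2.1.combo_interior_closure_mem_interior hq0
      (subset_closure hw) (by linarith [hs.2]) hs.1.le (by ring))).le
  have hz' : f z < c := hf z hz
  have hfb : f z + exitTime Ω z (z - x) * f (z - x) = c := by
    rw [hcdef, hbdef]
    unfold chordEnd
    simp [map_add, map_smul, smul_eq_mul]
  have hexact : c - f x = Gr Ω x z * (c - f z) := by
    have hfx : f x = f z - f (z - x) := by rw [map_sub]; ring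
    rw [Gr_eq_ratio hΩ hz hxz, div_mul_eq_mul_div, eq_div_iff (ne_of_gt hT), hfx]
    linear_combination hfb
  have h1 : c - f x ≤ Gr Ω x y * (c - f y) := Gr_halfspace hΩ hy hxy f c hH
  have h2 : c - f y ≤ Gr Ω y z * (c - f z) := Gr_halfspace hΩ hz hyz f c hH
  have hGxy : 0 < Gr Ω x y := Gr_pos hΩ hy
  have hchain : Gr Ω x z * (c - f z) ≤ Gr Ω x y * (Gr Ω y z * (c - f z)) := by
    rw [← hexact]
    calc c - f x ≤ Gr Ω x y * (c - f y) := h1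
      _ ≤ Gr Ω x y * (Gr Ω y z * (c - f z)) := mul_le_mul_of_nonneg_left h2 hGxy.le
  have hc0 : 0 < c - f z := sub_pos.mpr hz'
  have hchain' : Gr Ω x z * (c - f z) ≤ (Gr Ω x y * Gr Ω y z) * (c - f z) := by
    rw [mul_assoc]; exact hchain
  exact le_of_mul_le_mul_right hchain' hc0

/-- Multiplicativity of the one-sided ratios along a segment. -/
lemma Gr_segment {Ω : Set E} (hΩ : IsConvexBody Ω) {p x y : E} (hp : p ∈ interior Ω)
    (hx : x ∈ interior Ω) (hy : y ∈ segment ℝ p x) :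
    Gr Ω p x = Gr Ω p y * Gr Ω y x ∧ Gr Ω x p = Gr Ω x y * Gr Ω y p := by
  rw [segment_eq_image] at hy
  obtain ⟨t, ht, rfl⟩ := hy
  beta_reduce
  by_cases hpx : p = x
  · subst hpx
    have hyy : (1 - t) • p + t • p = p := by module
    rw [hyy]
    simp [Gr]
  by_cases ht0 : t = 0
  · subst ht0
    have hyy : (1 - (0:ℝ)) • p + (0:ℝ) • x = p := by module
    rw [hyy]
    have h1 : Gr Ω p p = 1 := by simp [Gr]
    rw [h1]
    constructor <;> ring
  by_cases ht1 : t = 1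
  · subst ht1
    have hyy : (1 - (1:ℝ)) • p + (1:ℝ) • x = x := by module
    rw [hyy]
    have h1 : Gr Ω x x = 1 := by simp [Gr]
    rw [h1]
    constructor <;> ring
  have ht0' : 0 < t := lt_of_le_of_ne ht.1 (Ne.symm ht0)
  have ht1' : t < 1 := lt_of_le_of_ne ht.2 ht1
  have h1t : (0:ℝ) < 1 - t := by linarith
  set y : E := (1 - t) • p + t • x with hydef
  have hy_int : y ∈ interior Ω :=
    hΩ.2.1.interior hp hx (by linarith) ht0'.le (by ring)
  have hxp : x - p ≠ 0 := sub_ne_zero.mpr (Ne.symm hpx)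
  have hyp : y - p = t • (x - p) := by rw [hydef]; module
  have hxy' : x - y = (1 - t) • (x - p) := by rw [hydef]; module
  have hpy_ne : p ≠ y := by
    intro h
    have h0 : y - p = 0 := by rw [← h]; abel
    rw [hyp] at h0
    exact hxp (by simpa [ht0] using smul_eq_zero.mp h0)
  have hyx_ne : y ≠ x := by
    intro h
    have h0 : x - y = 0 := by rw [h]; abel
    rw [hxy'] at h0
    rcases smul_eq_zero.mp h0 with h' | h'
    · exact absurd h' (by linarith [h1t] : (1:ℝ) - t ≠ 0)
    · exact hxp h'
  constructor
  · -- ratios towards the endpoint beyond x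
    obtain ⟨hT, hbΩ, hbni⟩ := exitTime_spec hΩ hx hxp
    set T : ℝ := exitTime Ω x (x - p) with hTdef
    set b : E := chordEnd Ω x (x - p) with hbdef
    have hb_eq : b = x + T • (x - p) := rfl
    have hpoint1 : y + ((1 - t + T) / t) • (t • (x - p)) = b := by
      rw [smul_smul, div_mul_cancel₀ _ (ne_of_gt ht0'), hb_eq, hydef]; module
    have e1 : chordEnd Ω y (y - p) = b := by
      have hex : exitTime Ω y (y - p) = (1 - t + T) / t := by
        rw [hyp]
        refine exitTime_eq_s15 hΩ.2.1 hy_int (by positivity) ?_ ?_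
        · rw [hpoint1]; exact hbΩ
        · rw [hpoint1]; exact hbni
      show y + exitTime Ω y (y - p) • (y - p) = b
      rw [hex, hyp]; exact hpoint1
    have hpoint2 : x + (T / (1 - t)) • ((1 - t) • (x - p)) = b := by
      rw [smul_smul, div_mul_cancel₀ _ (ne_of_gt h1t), hb_eq]
    have e2 : chordEnd Ω x (x - y) = b := by
      have hex : exitTime Ω x (x - y) = T / (1 - t) := by
        rw [hxy']
        refine exitTime_eq_s15 hΩ.2.1 hx (by positivity) ?_ ?_
        · rw [hpoint2]; exact hbΩ
        · rw [hpoint2]; exact hbni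
      show x + exitTime Ω x (x - y) • (x - y) = b
      rw [hex, hxy']; exact hpoint2
    have hyb : y ≠ b := fun h => hbni (h ▸ hy_int)
    have hyb' : ‖y - b‖ ≠ 0 := norm_ne_zero_iff.mpr (sub_ne_zero.mpr hyb)
    rw [Gr, if_neg hpx, Gr, if_neg hpy_ne, Gr, if_neg hyx_ne, e1, e2, ← hbdef,
      div_mul_div_cancel₀ hyb']
  · -- ratios towards the endpoint beyond p
    obtain ⟨hS, haΩ, hani⟩ := exitTime_spec hΩ hp (show p - x ≠ 0 from sub_ne_zero.mpr hpx)
    set S : ℝ := exitTime Ω p (p - x) with hSdef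
    set a : E := chordEnd Ω p (p - x) with hadef
    have ha_eq : a = p + S • (p - x) := rfl
    have hpy : p - y = t • (p - x) := by rw [hydef]; module
    have hyx2 : y - x = (1 - t) • (p - x) := by rw [hydef]; module
    have hpoint3 : p + (S / t) • (t • (p - x)) = a := by
      rw [smul_smul, div_mul_cancel₀ _ (ne_of_gt ht0'), ha_eq]
    have e3 : chordEnd Ω p (p - y) = a := by
      have hex : exitTime Ω p (p - y) = S / t := by
        rw [hpy]
        refine exitTime_eq_s15 hΩ.2.1 hp (by positivity) ?_ ?_
        · rw [hpoint3]; exact haΩ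
        · rw [hpoint3]; exact hani
      show p + exitTime Ω p (p - y) • (p - y) = a
      rw [hex, hpy]; exact hpoint3
    have hpoint4 : y + ((t + S) / (1 - t)) • ((1 - t) • (p - x)) = a := by
      rw [smul_smul, div_mul_cancel₀ _ (ne_of_gt h1t), ha_eq, hydef]; module
    have e4 : chordEnd Ω y (y - x) = a := by
      have hex : exitTime Ω y (y - x) = (t + S) / (1 - t) := by
        rw [hyx2]
        refine exitTime_eq_s15 hΩ.2.1 hy_int (by positivity) ?_ ?_
        · rw [hpoint4]; exact haΩ
        · rw [hpoint4]; exact hani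
      show y + exitTime Ω y (y - x) • (y - x) = a
      rw [hex, hyx2]; exact hpoint4
    have hya : y ≠ a := fun h => hani (h ▸ hy_int)
    have hya' : ‖y - a‖ ≠ 0 := norm_ne_zero_iff.mpr (sub_ne_zero.mpr hya)
    rw [Gr, if_neg (Ne.symm hpx), Gr, if_neg (Ne.symm hyx_ne), Gr, if_neg (Ne.symm hpy_ne),
      e3, e4, ← hadef, div_mul_div_cancel₀ hya']

end Aux

/-- Hilbert Voronoi cells are star-shaped with respect to their site. -/
theorem hilbert_voronoi_starShaped (Ω : Set (EuclideanSpace ℝ (Fin 2)))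
    (hΩ : IsConvexBody Ω) (P : Finset (EuclideanSpace ℝ (Fin 2)))
    (hP : (P : Set (EuclideanSpace ℝ (Fin 2))) ⊆ interior Ω)
    (p : EuclideanSpace ℝ (Fin 2)) (hpP : p ∈ P)
    (x : EuclideanSpace ℝ (Fin 2)) (hx : x ∈ interior Ω)
    (hvor : ∀ p' ∈ P, hilbertDist Ω p x ≤ hilbertDist Ω p' x)
    (y : EuclideanSpace ℝ (Fin 2)) (hy : y ∈ segment ℝ p x) :
    ∀ p' ∈ P, hilbertDist Ω p y ≤ hilbertDist Ω p' y := by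
  intro p' hp'P
  have hp_int : p ∈ interior Ω := hP hpP
  have hp'_int : p' ∈ interior Ω := hP hp'P
  have hy_int : y ∈ interior Ω := (hΩ.2.1.interior).segment_subset hp_int hx hy
  obtain ⟨hseg1, hseg2⟩ := Gr_segment hΩ hp_int hx hy
  have g_xp : 0 < Gr Ω x p := Gr_pos hΩ hp_int
  have g_px : 0 < Gr Ω p x := Gr_pos hΩ hx
  have g_yp : 0 < Gr Ω y p := Gr_pos hΩ hp_int
  have g_py : 0 < Gr Ω p y := Gr_pos hΩ hy_int
  have g_xy : 0 < Gr Ω x y := Gr_pos hΩ hy_int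
  have g_yx : 0 < Gr Ω y x := Gr_pos hΩ hx
  have g_xp' : 0 < Gr Ω x p' := Gr_pos hΩ hp'_int
  have g_p'x : 0 < Gr Ω p' x := Gr_pos hΩ hx
  have g_yp' : 0 < Gr Ω y p' := Gr_pos hΩ hp'_int
  have g_p'y : 0 < Gr Ω p' y := Gr_pos hΩ hy_int
  have hadd : hilbertDist Ω p x = hilbertDist Ω p y + hilbertDist Ω y x := by
    rw [hilbertDist_eq_Gr, hilbertDist_eq_Gr, hilbertDist_eq_Gr, hseg1, hseg2,
      Real.log_mul (mul_ne_zero g_xy.ne' g_yp.ne') (mul_ne_zero g_py.ne' g_yx.ne'),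
      Real.log_mul g_xy.ne' g_yp.ne', Real.log_mul g_py.ne' g_yx.ne',
      Real.log_mul g_yp.ne' g_py.ne', Real.log_mul g_xy.ne' g_yx.ne']
    ring
  have htri : hilbertDist Ω p' x ≤ hilbertDist Ω p' y + hilbertDist Ω y x := by
    rw [hilbertDist_eq_Gr, hilbertDist_eq_Gr, hilbertDist_eq_Gr]
    have hA : Gr Ω x p' ≤ Gr Ω x y * Gr Ω y p' := Gr_triangle hΩ hx hy_int hp'_int
    have hB : Gr Ω p' x ≤ Gr Ω p' y * Gr Ω y x := Gr_triangle hΩ hp'_int hy_int hx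
    have hmul : Gr Ω x p' * Gr Ω p' x ≤ (Gr Ω x y * Gr Ω y p') * (Gr Ω p' y * Gr Ω y x) :=
      mul_le_mul hA hB g_p'x.le (by positivity)
    have hlog := Real.log_le_log (mul_pos g_xp' g_p'x) hmul
    rw [Real.log_mul g_xp'.ne' g_p'x.ne',
      Real.log_mul (mul_ne_zero g_xy.ne' g_yp'.ne') (mul_ne_zero g_p'y.ne' g_yx.ne'),
      Real.log_mul g_xy.ne' g_yp'.ne', Real.log_mul g_p'y.ne' g_yx.ne'] at hlog
    rw [Real.log_mul g_xp'.ne' g_p'x.ne', Real.log_mul g_yp'.ne' g_p'y.ne',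
      Real.log_mul g_xy.ne' g_yx.ne']
    linarith
  have hvx := hvor p' hp'P
  have hyx : hilbertDist Ω y x = hilbertDist Ω y x := rfl
  linarith
end

section
/- For a convex polygon Ω with m vertices, a point p ∈ int(Ω), and a radius ρ > 0, the Hilbert ball B(p,ρ) is a convex polygon with at most 2m vertices; specifically, B(p,ρ) equals the convex hull of the 2m points obtained by moving Hilbert distance ρ from p along each of the m spokes (chords from p through each vertex of Ω) in both directions. -/
open Filter Topology
open scoped Classical

/-!
Translate `p` to the origin and let `g` be the gauge of the translated polygon `D`. On the chord
through `0` and `w` the Hilbert distance is `½ log ((1 + g (-w)) / (1 - g w))`, so for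
`K = exp (2ρ)` the ball is the sublevel set `{w | g (-w) + K g w ≤ K - 1}`, a compact convex
set and hence, by Krein–Milman, the convex hull of its extreme points. Off the spokes, `w / g w`
and `-w / g (-w)` lie inside edges of `D`, where `g` is linear; then `g (-·) + K g` is linear
near `w`, the boundary of the ball is straight there, and `w` is not an extreme point.
-/

open Set Module
open scoped Pointwise

local notation "ℝ²" => EuclideanSpace ℝ (Fin 2)

lemma half_log_div_le_iff {a b ρ : ℝ} (ha : 0 ≤ a) (hb : b < 1) :
    1 / 2 * Real.log ((1 + a) / (1 - b)) ≤ ρ ↔ a + Real.exp (2 * ρ) * b ≤ Real.exp (2 * ρ) - 1 := by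
  rw [← le_div_iff₀' one_half_pos, div_div_eq_mul_div, div_one, mul_comm,
    Real.log_le_iff_le_exp (by apply div_pos <;> linarith), div_le_iff₀ (by linarith)]
  constructor <;> intro h <;> linarith

lemma half_log_div_eq_iff {a b ρ : ℝ} (ha : 0 ≤ a) (hb : b < 1) :
    1 / 2 * Real.log ((1 + a) / (1 - b)) = ρ ↔ a + Real.exp (2 * ρ) * b = Real.exp (2 * ρ) - 1 := by
  have hpos : 0 < (1 + a) / (1 - b) := by apply div_pos <;> linarith
  have hlog : Real.log ((1 + a) / (1 - b)) = 2 * ρ ↔ (1 + a) / (1 - b) = Real.exp (2 * ρ) :=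
    ⟨fun h => by rw [← h, Real.exp_log hpos], fun h => by rw [h, Real.log_exp]⟩
  rw [show 1 / 2 * Real.log ((1 + a) / (1 - b)) = ρ ↔ Real.log ((1 + a) / (1 - b)) = 2 * ρ by
    constructor <;> intro h <;> linarith, hlog, div_eq_iff (by linarith)]
  constructor <;> intro h <;> linarith

lemma collinear_insert_add_smul_sub {E : Type*} [AddCommGroup E] [Module ℝ E] (p v : E) (r : ℝ) :
    Collinear ℝ {p, v, p + r • (v - p)} := by
  rw [pair_comm v, insert_comm p]
  refine collinear_insert_of_mem_affineSpan_pair ?_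
  convert AffineMap.lineMap_mem_affineSpan_pair r p v using 1
  rw [AffineMap.lineMap_apply, vsub_eq_sub, vadd_eq_add, add_comm]

section

variable {E : Type*} [NormedAddCommGroup E] [NormedSpace ℝ E] {D : Set E} {K c : ℝ}

lemma gauge_le_one_iff_mem (hDc : Convex ℝ D) (hD0 : D ∈ 𝓝 0) (hDcl : IsClosed D) {x : E} :
    gauge D x ≤ 1 ↔ x ∈ D := by
  rw [gauge_le_one_iff_mem_closure hDc hD0, hDcl.closure_eq]

lemma gauge_pos_of_isBounded (hD0 : D ∈ 𝓝 0) (hDb : Bornology.IsBounded D) {x : E}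
    (hx : x ≠ 0) : 0 < gauge D x :=
  (gauge_pos (absorbent_nhds_zero hD0) ((NormedSpace.isVonNBounded_iff ℝ).2 hDb)).2 hx

lemma isGreatest_smul_mem_gauge_inv (hDc : Convex ℝ D) (hDcomp : IsCompact D)
    (hD0 : D ∈ 𝓝 0) {v : E} (hv : v ≠ 0) :
    IsGreatest {t : ℝ | t • v ∈ D} (gauge D v)⁻¹ := by
  have hpos := gauge_pos_of_isBounded hD0 hDcomp.isBounded hv
  refine ⟨?_, fun t ht => ?_⟩
  · rw [mem_ofPred_eq, ← gauge_le_one_iff_mem hDc hD0 hDcomp.isClosed,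
      gauge_smul_of_nonneg (inv_nonneg.2 hpos.le), smul_eq_mul, inv_mul_cancel₀ hpos.ne']
  · rcases le_or_gt t 0 with ht0 | ht0
    · exact ht0.trans (inv_nonneg.2 hpos.le)
    · have := gauge_le_one_of_mem (s := D) ht
      rw [gauge_smul_of_nonneg ht0.le, smul_eq_mul] at this
      rwa [← le_div_iff₀ hpos, one_div] at this

noncomputable def hilbertBallGauge (D : Set E) (K : ℝ) (w : E) : ℝ :=
  gauge D (-w) + K * gauge D w

noncomputable def spokePoint (D : Set E) (K c : ℝ) (d : E) : E :=
  (c / hilbertBallGauge D K d) • d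

@[simp]
lemma hilbertBallGauge_zero : hilbertBallGauge D K 0 = 0 := by
  simp [hilbertBallGauge]

lemma hilbertBallGauge_smul_of_nonneg {r : ℝ} (hr : 0 ≤ r) (w : E) :
    hilbertBallGauge D K (r • w) = r * hilbertBallGauge D K w := by
  simp only [hilbertBallGauge, ← smul_neg, gauge_smul_of_nonneg hr, smul_eq_mul]
  ring

lemma hilbertBallGauge_add_le (hDc : Convex ℝ D) (hD0 : D ∈ 𝓝 0) (hK : 0 ≤ K) (u w : E) :
    hilbertBallGauge D K (u + w) ≤ hilbertBallGauge D K u + hilbertBallGauge D K w := by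
  have hD := absorbent_nhds_zero (𝕜 := ℝ) hD0
  have h₁ := gauge_add_le hDc hD (-u) (-w)
  have h₂ := mul_le_mul_of_nonneg_left (gauge_add_le hDc hD u w) hK
  simp only [hilbertBallGauge, neg_add]
  linarith

lemma continuous_hilbertBallGauge (hDc : Convex ℝ D) (hD0 : D ∈ 𝓝 0) :
    Continuous (hilbertBallGauge D K) :=
  have hg := continuous_gauge hDc hD0
  (hg.comp continuous_neg).add (continuous_const.mul hg)

lemma hilbertBallGauge_pos (hD0 : D ∈ 𝓝 0) (hDb : Bornology.IsBounded D) (hK : 0 ≤ K) {w : E}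
    (hw : w ≠ 0) : 0 < hilbertBallGauge D K w :=
  add_pos_of_pos_of_nonneg (gauge_pos_of_isBounded hD0 hDb (neg_ne_zero.2 hw))
    (mul_nonneg hK (gauge_nonneg w))

lemma hilbertBallGauge_spokePoint (hD0 : D ∈ 𝓝 0) (hDb : Bornology.IsBounded D) (hK : 0 ≤ K)
    (hc : 0 ≤ c) {d : E} (hd : d ≠ 0) : hilbertBallGauge D K (spokePoint D K c d) = c := by
  have := hilbertBallGauge_pos hD0 hDb hK hd
  rw [spokePoint, hilbertBallGauge_smul_of_nonneg (by positivity), div_mul_cancel₀ _ this.ne']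

lemma gauge_lt_one_of_hilbertBallGauge_le (hK : 0 < K) {w : E}
    (hw : hilbertBallGauge D K w ≤ K - 1) : gauge D w < 1 := by
  have := gauge_nonneg (s := D) (-w)
  rw [hilbertBallGauge] at hw
  by_contra! h
  nlinarith

lemma convex_setOf_hilbertBallGauge_le (hDc : Convex ℝ D) (hD0 : D ∈ 𝓝 0) (hK : 0 ≤ K) :
    Convex ℝ {w | hilbertBallGauge D K w ≤ c} := by
  intro x hx y hy s t hs ht hst
  calc hilbertBallGauge D K (s • x + t • y)
      ≤ s * hilbertBallGauge D K x + t * hilbertBallGauge D K y := by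
        grw [hilbertBallGauge_add_le hDc hD0 hK, hilbertBallGauge_smul_of_nonneg hs,
          hilbertBallGauge_smul_of_nonneg ht]
    _ ≤ s * c + t * c := by gcongr <;> assumption
    _ = c := by rw [← add_mul, hst, one_mul]

lemma isCompact_setOf_hilbertBallGauge_le (hDc : Convex ℝ D) (hDcomp : IsCompact D)
    (hD0 : D ∈ 𝓝 0) (hK : 0 ≤ K) (hc : 0 < c) :
    IsCompact {w | hilbertBallGauge D K w ≤ c} := by
  refine ((hDcomp.smul c).neg).of_isClosed_subset
    (isClosed_le (continuous_hilbertBallGauge hDc hD0) continuous_const) fun w hw => ?_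
  have : gauge D (-w) ≤ c := by
    have := mul_nonneg hK (gauge_nonneg (s := D) w)
    simp only [mem_ofPred_eq, hilbertBallGauge] at hw
    linarith
  rw [Set.mem_neg, mem_smul_set_iff_inv_smul_mem₀ hc.ne', ← gauge_le_one_iff_mem hDc hD0
    hDcomp.isClosed, gauge_smul_of_nonneg (inv_nonneg.2 hc.le), smul_eq_mul,
    inv_mul_le_one₀ hc]
  exact this

lemma notMem_extremePoints_of_eventually_add_smul_mem {B : Set E} {w v : E} (hv : v ≠ 0)
    (h : ∀ᶠ σ in 𝓝 (0 : ℝ), w + σ • v ∈ B) : w ∉ B.extremePoints ℝ := by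
  intro hw
  have hneg : ∀ᶠ σ in 𝓝 (0 : ℝ), w - σ • v ∈ B := by
    simpa [← sub_eq_add_neg] using (continuous_neg.tendsto' (0 : ℝ) 0 neg_zero).eventually h
  obtain ⟨σ, ⟨hsub, hadd⟩, hσ⟩ :=
    ((hneg.and h).filter_mono nhdsWithin_le_nhds).and self_mem_nhdsWithin |>.exists
      (f := 𝓝[>] (0 : ℝ))
  have := hw.2 hsub hadd (mem_openSegment_sub_add w (σ • v))
  exact smul_ne_zero (ne_of_gt hσ) hv (by simpa using this)

lemma notMem_extremePoints_of_eventuallyEq_linearMap [FiniteDimensional ℝ E]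
    (hE : 1 < finrank ℝ E) {φ : E → ℝ} {L : E →ₗ[ℝ] ℝ} {w : E} (hφ : φ =ᶠ[𝓝 w] L) :
    w ∉ {z | φ z ≤ c}.extremePoints ℝ := by
  intro hw
  obtain ⟨v, hvL, hv⟩ := Submodule.exists_mem_ne_zero_of_ne_bot
    (LinearMap.ker_ne_bot_of_finrank_lt (f := L) (by rwa [finrank_self]))
  have hline : Tendsto (fun σ : ℝ => w + σ • v) (𝓝 0) (𝓝 w) :=
    (by fun_prop : Continuous fun σ : ℝ => w + σ • v).tendsto' 0 w (by simp)
  refine notMem_extremePoints_of_eventually_add_smul_mem hv ?_ hw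
  filter_upwards [hline.eventually hφ] with σ hσ
  rw [hσ, map_add, map_smul, LinearMap.mem_ker.1 hvL, smul_zero, add_zero,
    ← hφ.self_of_nhds]
  exact hw.1

lemma exists_dual_eq_one_le_gauge (hDc : Convex ℝ D) (hD0 : D ∈ 𝓝 0) {x : E}
    (hx : x ∉ interior D) : ∃ f : StrongDual ℝ E, f x = 1 ∧ ∀ z, f z ≤ gauge D z := by
  obtain ⟨f, hfx, hf⟩ := separate_convex_open_set (mem_interior_iff_mem_nhds.2 hD0)
    hDc.interior isOpen_interior hx
  refine ⟨f, hfx, fun z => le_of_forall_gt fun r hr => ?_⟩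
  have hr0 : 0 < r := (gauge_nonneg z).trans_lt hr
  have hmem : r⁻¹ • z ∈ interior D := by
    rw [← gauge_lt_one_iff_mem_interior hDc hD0, gauge_smul_of_nonneg (inv_nonneg.2 hr0.le),
      smul_eq_mul, inv_mul_lt_one₀ hr0]
    exact hr
  have := hf _ hmem
  rwa [map_smul, smul_eq_mul, inv_mul_lt_one₀ hr0] at this

lemma linearIndependent_fin2_of_map_eq_one {F : Type*} [AddCommGroup F] [Module ℝ F]
    (f : F →ₗ[ℝ] ℝ) {x₁ x₂ : F} (h₁ : f x₁ = 1) (h₂ : f x₂ = 1) (hne : x₁ ≠ x₂) :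
    LinearIndependent ℝ ![x₁, x₂] := by
  refine linearIndependent_fin2.2 ⟨fun h => by simp_all, fun a ha => hne ?_⟩
  have : a = 1 := by simpa [h₁, h₂] using congr_arg f ha
  simpa [this] using ha.symm

lemma eventually_exists_pos_smul_add_smul [FiniteDimensional ℝ E] (hE : finrank ℝ E = 2)
    {x₁ x₂ : E} (hind : LinearIndependent ℝ ![x₁, x₂]) {s t : ℝ} (hs : 0 < s) (ht : 0 < t) :
    ∀ᶠ z in 𝓝 (s • x₁ + t • x₂), ∃ α β : ℝ, 0 < α ∧ 0 < β ∧ z = α • x₁ + β • x₂ := by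
  let b := basisOfLinearIndependentOfCardEqFinrank hind (by simp [hE])
  have hb₀ : b 0 = x₁ := by simp [b]
  have hb₁ : b 1 = x₂ := by simp [b]
  let coord := b.equivFun.toContinuousLinearEquiv
  have hcoord : coord (s • x₁ + t • x₂) = ![s, t] := by
    ext i
    fin_cases i <;> simp [coord, ← hb₀, ← hb₁]
  have hpos : ∀ i, ∀ᶠ z in 𝓝 (s • x₁ + t • x₂), 0 < coord z i := fun i =>
    (((continuous_apply i).comp coord.continuous).tendsto _).eventually
      (lt_mem_nhds (by fin_cases i <;> simp [hcoord, hs, ht]))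
  filter_upwards [hpos 0, hpos 1] with z h₀ h₁
  refine ⟨coord z 0, coord z 1, h₀, h₁, ?_⟩
  have := b.sum_equivFun z
  rw [Fin.sum_univ_two, hb₀, hb₁] at this
  exact this.symm

/-- `x` lies inside an edge `[x₁, x₂]`, and the gauge equals the supporting functional on the open
cone over that edge, which is a neighbourhood of `x` because `finrank ℝ E = 2`. -/
lemma gauge_eventuallyEq_dual_of_notMem_extremePoints [FiniteDimensional ℝ E]
    (hE : finrank ℝ E = 2) (hDc : Convex ℝ D) (hD0 : D ∈ 𝓝 0) (hDcl : IsClosed D) {x : E}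
    (hx : gauge D x = 1) (hxe : x ∉ D.extremePoints ℝ) :
    ∃ f : StrongDual ℝ E, gauge D =ᶠ[𝓝 x] f := by
  have hxD : x ∈ D := (gauge_le_one_iff_mem hDc hD0 hDcl).1 hx.le
  obtain ⟨f, hfx, hf⟩ := exists_dual_eq_one_le_gauge hDc hD0
    (x := x) (by rw [← gauge_lt_one_iff_mem_interior hDc hD0, hx]; exact lt_irrefl 1)
  simp only [mem_extremePoints, hxD, true_and, not_forall] at hxe
  obtain ⟨x₁, hx₁, x₂, hx₂, ⟨s, t, hs, ht, hst, rfl⟩, hne⟩ := hxe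
  have hf₁ : f x₁ ≤ 1 := (hf x₁).trans (gauge_le_one_of_mem hx₁)
  have hf₂ : f x₂ ≤ 1 := (hf x₂).trans (gauge_le_one_of_mem hx₂)
  have hsum : s * f x₁ + t * f x₂ = 1 := by simpa using hfx
  have hf₁' : f x₁ = 1 := by nlinarith
  have hf₂' : f x₂ = 1 := by nlinarith
  have hind := linearIndependent_fin2_of_map_eq_one (f : E →ₗ[ℝ] ℝ) hf₁' hf₂'
    fun h => hne (by rw [← h, ← add_smul, hst, one_smul]; exact ⟨rfl, rfl⟩)
  refine ⟨f, ?_⟩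
  filter_upwards [eventually_exists_pos_smul_add_smul hE hind hs ht]
    with z ⟨α, β, hα, hβ, hz⟩
  rw [hz]
  refine le_antisymm ?_ (hf _)
  calc gauge D (α • x₁ + β • x₂) ≤ α * gauge D x₁ + β * gauge D x₂ := by
        grw [gauge_add_le hDc (absorbent_nhds_zero hD0), gauge_smul_of_nonneg hα.le,
          gauge_smul_of_nonneg hβ.le, smul_eq_mul, smul_eq_mul]
    _ ≤ α * 1 + β * 1 := by gcongr <;> exact gauge_le_one_of_mem ‹_›
    _ = f (α • x₁ + β • x₂) := by simp [hf₁', hf₂']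

lemma gauge_eventuallyEq_dual [FiniteDimensional ℝ E] (hE : finrank ℝ E = 2) (hDc : Convex ℝ D)
    (hDcomp : IsCompact D) (hD0 : D ∈ 𝓝 0) {u : E} (hu : u ≠ 0)
    (hue : (gauge D u)⁻¹ • u ∉ D.extremePoints ℝ) : ∃ f : StrongDual ℝ E, gauge D =ᶠ[𝓝 u] f := by
  have hg := gauge_pos_of_isBounded hD0 hDcomp.isBounded hu
  obtain ⟨f, hf⟩ := gauge_eventuallyEq_dual_of_notMem_extremePoints hE hDc hD0 hDcomp.isClosed
    (by rw [gauge_smul_of_nonneg (inv_nonneg.2 hg.le), smul_eq_mul, inv_mul_cancel₀ hg.ne'])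
    hue
  refine ⟨f, ?_⟩
  have hlim : Tendsto (fun z => (gauge D u)⁻¹ • z) (𝓝 u) (𝓝 ((gauge D u)⁻¹ • u)) :=
    (continuous_const_smul _).tendsto u
  filter_upwards [hlim.eventually hf] with z hz
  simpa [gauge_smul_of_nonneg (inv_nonneg.2 hg.le), hg.ne'] using hz

lemma hilbertBallGauge_eventuallyEq_linearMap [FiniteDimensional ℝ E] (hE : finrank ℝ E = 2)
    (hDc : Convex ℝ D) (hDcomp : IsCompact D) (hD0 : D ∈ 𝓝 0) {w : E} (hw : w ≠ 0)
    (hx : (gauge D w)⁻¹ • w ∉ D.extremePoints ℝ)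
    (hy : (gauge D (-w))⁻¹ • -w ∉ D.extremePoints ℝ) :
    ∃ L : E →ₗ[ℝ] ℝ, hilbertBallGauge D K =ᶠ[𝓝 w] L := by
  obtain ⟨f, hf⟩ := gauge_eventuallyEq_dual hE hDc hDcomp hD0 hw hx
  obtain ⟨f', hf'⟩ := gauge_eventuallyEq_dual hE hDc hDcomp hD0 (neg_ne_zero.2 hw) hy
  refine ⟨K • (f : E →ₗ[ℝ] ℝ) - f', ?_⟩
  filter_upwards [hf, (continuous_neg.tendsto w).eventually hf'] with z hz hz'
  simp only [hilbertBallGauge, hz, hz', LinearMap.sub_apply, LinearMap.smul_apply,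
    ContinuousLinearMap.coe_coe, map_neg, smul_eq_mul]
  ring

theorem extremePoints_setOf_hilbertBallGauge_le_subset [FiniteDimensional ℝ E]
    (hE : finrank ℝ E = 2) (hDc : Convex ℝ D) (hDcomp : IsCompact D) (hD0 : D ∈ 𝓝 0)
    (hc : 0 < c) :
    {w | hilbertBallGauge D K w ≤ c}.extremePoints ℝ ⊆
      ⋃ d ∈ D.extremePoints ℝ, {spokePoint D K c d, spokePoint D K c (-d)} := by
  intro w hw
  have hwc : hilbertBallGauge D K w = c := by
    refine hw.1.antisymm (not_lt.1 fun hlt => ?_)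
    have : Nontrivial E := Module.nontrivial_of_finrank_eq_succ hE
    have hint : w ∈ interior {w | hilbertBallGauge D K w ≤ c} :=
      mem_interior_iff_mem_nhds.2 <| mem_of_superset
        ((isOpen_lt (continuous_hilbertBallGauge hDc hD0) continuous_const).mem_nhds hlt)
        fun z (hz : _ < c) => hz.le
    exact (disjoint_interior_extremePoints _).ne_of_mem hint hw rfl
  have hw0 : w ≠ 0 := by
    rintro rfl
    simp only [hilbertBallGauge_zero] at hwc
    exact hc.ne hwc
  have hray : ∀ d (r : ℝ), 0 < r → w = r • d → w = spokePoint D K c d := fun d r hr hwd => by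
    have hcd : c = r * hilbertBallGauge D K d := by
      rw [← hwc, hwd, hilbertBallGauge_smul_of_nonneg hr.le]
    have hd : hilbertBallGauge D K d ≠ 0 := fun h => hc.ne' (by simpa [h] using hcd)
    rw [spokePoint, hcd, mul_div_cancel_right₀ _ hd, hwd]
  have hg := gauge_pos_of_isBounded hD0 hDcomp.isBounded hw0
  have hg' := gauge_pos_of_isBounded hD0 hDcomp.isBounded (neg_ne_zero.2 hw0)
  by_cases hx : (gauge D w)⁻¹ • w ∈ D.extremePoints ℝ
  · refine mem_biUnion hx (Or.inl (hray _ _ hg ?_))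
    rw [smul_smul, mul_inv_cancel₀ hg.ne', one_smul]
  by_cases hy : (gauge D (-w))⁻¹ • -w ∈ D.extremePoints ℝ
  · refine mem_biUnion hy (Or.inr (hray _ _ hg' ?_))
    rw [smul_neg, smul_smul, mul_inv_cancel₀ hg'.ne', one_smul, neg_neg]
  obtain ⟨L, hL⟩ := hilbertBallGauge_eventuallyEq_linearMap hE hDc hDcomp hD0 hw0 hx hy
  exact (notMem_extremePoints_of_eventuallyEq_linearMap (by omega) hL hw).elim

lemma eq_convexHull_of_extremePoints_subset {B T : Set E} (hBcomp : IsCompact B)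
    (hBc : Convex ℝ B) (hT : T.Finite) (hext : B.extremePoints ℝ ⊆ T) (hTB : T ⊆ B) :
    B = convexHull ℝ T := by
  refine (convexHull_min hTB hBc).antisymm' ?_
  calc B = closure (convexHull ℝ (B.extremePoints ℝ)) :=
        (closure_convexHull_extremePoints hBcomp hBc).symm
    _ ⊆ closure (convexHull ℝ T) := by gcongr
    _ = convexHull ℝ T := (hT.isCompact_convexHull ℝ).isClosed.closure_eq

variable [DecidableEq E]

noncomputable def spokes (D : Set E) (K c : ℝ) (T : Finset E) : Finset E :=
  T.image (spokePoint D K c) ∪ T.image (spokePoint D K c ∘ Neg.neg)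

lemma card_spokes_le (D : Set E) (K c : ℝ) (T : Finset E) :
    (spokes D K c T).card ≤ 2 * T.card :=
  (Finset.card_union_le _ _).trans (by grw [Finset.card_image_le, Finset.card_image_le]; omega)

lemma exists_smul_of_mem_spokes (hD0 : D ∈ 𝓝 0) (hDb : Bornology.IsBounded D) (hK : 0 ≤ K)
    (hc : 0 ≤ c) {T : Finset E} (hT0 : 0 ∉ T) {x : E} (hx : x ∈ spokes D K c T) :
    ∃ d ∈ T, ∃ r : ℝ, x = r • d ∧ hilbertBallGauge D K x = c := by
  have hne : ∀ d ∈ T, d ≠ 0 := fun d hd h => hT0 (h ▸ hd)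
  simp only [spokes, Finset.mem_union, Finset.mem_image, Function.comp_apply] at hx
  rcases hx with ⟨d, hd, rfl⟩ | ⟨d, hd, rfl⟩
  · exact ⟨d, hd, _, rfl, hilbertBallGauge_spokePoint hD0 hDb hK hc (hne d hd)⟩
  · refine ⟨d, hd, _, by rw [spokePoint, smul_neg, ← neg_smul], ?_⟩
    exact hilbertBallGauge_spokePoint hD0 hDb hK hc (neg_ne_zero.2 (hne d hd))

theorem setOf_hilbertBallGauge_le_eq_convexHull [FiniteDimensional ℝ E] (hE : finrank ℝ E = 2)
    (hDc : Convex ℝ D) (hDcomp : IsCompact D) (hD0 : D ∈ 𝓝 0) (hK : 0 ≤ K) (hc : 0 < c)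
    {T : Finset E} (hT : D.extremePoints ℝ ⊆ T) (hT0 : 0 ∉ T) :
    {w | hilbertBallGauge D K w ≤ c} = convexHull ℝ ↑(spokes D K c T) := by
  refine eq_convexHull_of_extremePoints_subset (isCompact_setOf_hilbertBallGauge_le hDc hDcomp
    hD0 hK hc) (convex_setOf_hilbertBallGauge_le hDc hD0 hK) (Finset.finite_toSet _)
    (fun w hw => ?_) fun w hw => ?_
  · obtain ⟨d, hd, hwd⟩ := mem_iUnion₂.1
      (extremePoints_setOf_hilbertBallGauge_le_subset hE hDc hDcomp hD0 hc hw)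
    have hdT : d ∈ T := hT hd
    rcases hwd with rfl | rfl
    · exact Finset.mem_union_left _ (Finset.mem_image_of_mem _ hdT)
    · exact Finset.mem_union_right _ (Finset.mem_image_of_mem _ hdT)
  · obtain ⟨-, -, -, -, hw⟩ := exists_smul_of_mem_spokes hD0 hDcomp.isBounded hK hc.le hT0 hw
    exact hw.le

end

section

variable {D : Set ℝ²}

lemma exitTime_vadd (hDc : Convex ℝ D) (hDcomp : IsCompact D) (hD0 : D ∈ 𝓝 0) (p : ℝ²)
    {v : ℝ²} (hv : v ≠ 0) (s : ℝ) :
    exitTime (p +ᵥ D) (p + s • v) v = (gauge D v)⁻¹ - s := by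
  obtain ⟨hmem, hmax⟩ := isGreatest_smul_mem_gauge_inv hDc hDcomp hD0 hv
  have hset : ∀ t, p + s • v + t • v ∈ p +ᵥ D ↔ (s + t) • v ∈ D := fun t => by
    rw [add_smul, add_assoc, ← vadd_eq_add, vadd_mem_vadd_set_iff]
  refine IsGreatest.csSup_eq ⟨?_, fun t ht => ?_⟩
  · rw [mem_ofPred_eq, hset, add_sub_cancel]
    exact hmem
  · have := hmax ((hset t).1 ht)
    linarith

lemma chordEnd_vadd (hDc : Convex ℝ D) (hDcomp : IsCompact D) (hD0 : D ∈ 𝓝 0) (p : ℝ²)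
    {v : ℝ²} (hv : v ≠ 0) (s : ℝ) :
    chordEnd (p +ᵥ D) (p + s • v) v = p + (gauge D v)⁻¹ • v := by
  rw [chordEnd, exitTime_vadd hDc hDcomp hD0 p hv s]
  module

theorem hilbertDist_vadd (hDc : Convex ℝ D) (hDcomp : IsCompact D) (hD0 : D ∈ 𝓝 0) (p : ℝ²)
    {w : ℝ²} (hw : w ∈ interior D) :
    hilbertDist (p +ᵥ D) p (p + w) =
      1 / 2 * Real.log ((1 + gauge D (-w)) / (1 - gauge D w)) := by
  rcases eq_or_ne w 0 with rfl | hw0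
  · simp [hilbertDist]
  have hb1 : gauge D w < 1 := (gauge_lt_one_iff_mem_interior hDc hD0).2 hw
  have ha := gauge_pos_of_isBounded hD0 hDcomp.isBounded (neg_ne_zero.2 hw0)
  have hb := gauge_pos_of_isBounded hD0 hDcomp.isBounded hw0
  set a := gauge D (-w)
  set b := gauge D w
  have hp' : chordEnd (p +ᵥ D) p (p - (p + w)) = p + a⁻¹ • -w := by
    simpa [sub_add_cancel_left] using chordEnd_vadd hDc hDcomp hD0 p (neg_ne_zero.2 hw0) 0
  have hq' : chordEnd (p +ᵥ D) (p + w) (p + w - p) = p + b⁻¹ • w := by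
    simpa using chordEnd_vadd hDc hDcomp hD0 p hw0 1
  have hnorm : ∀ c : ℝ, 0 < c → ‖c • w‖ = c * ‖w‖ := fun c hc => by
    rw [norm_smul, Real.norm_of_nonneg hc.le]
  have hbinv : 1 < b⁻¹ := one_lt_inv_iff₀.2 ⟨hb, hb1⟩
  rw [hilbertDist, if_neg (by simpa using hw0), hp', hq',
    show p + w - (p + a⁻¹ • -w) = (1 + a⁻¹) • w by module,
    show p - (p + a⁻¹ • -w) = a⁻¹ • w by module,
    show p - (p + b⁻¹ • w) = -(b⁻¹ • w) by module,
    show p + w - (p + b⁻¹ • w) = -((b⁻¹ - 1) • w) by module,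
    norm_neg, norm_neg, hnorm _ (by positivity), hnorm _ (by positivity),
    hnorm _ (by positivity), hnorm _ (by linarith)]
  congr 2
  have : 0 < ‖w‖ := norm_pos_iff.2 hw0
  field_simp
  ring

theorem setOf_hilbertBall_eq_vadd (hDc : Convex ℝ D) (hDcomp : IsCompact D) (hD0 : D ∈ 𝓝 0)
    (p : ℝ²) (ρ : ℝ) :
    {x | x ∈ interior (p +ᵥ D) ∧ hilbertDist (p +ᵥ D) p x ≤ ρ} =
      p +ᵥ {w | hilbertBallGauge D (Real.exp (2 * ρ)) w ≤ Real.exp (2 * ρ) - 1} := by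
  ext x
  obtain ⟨w, rfl⟩ : ∃ w, x = p + w := ⟨-p + x, by simp⟩
  rw [← vadd_eq_add, vadd_mem_vadd_set_iff, mem_ofPred_eq, mem_ofPred_eq, interior_vadd,
    vadd_mem_vadd_set_iff, vadd_eq_add]
  constructor
  · rintro ⟨hw, hdist⟩
    rw [hilbertDist_vadd hDc hDcomp hD0 p hw] at hdist
    exact (half_log_div_le_iff (gauge_nonneg _)
      ((gauge_lt_one_iff_mem_interior hDc hD0).2 hw)).1 hdist
  · intro h
    have hw := gauge_lt_one_of_hilbertBallGauge_le (Real.exp_pos _) h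
    refine ⟨(gauge_lt_one_iff_mem_interior hDc hD0).1 hw, ?_⟩
    rw [hilbertDist_vadd hDc hDcomp hD0 p ((gauge_lt_one_iff_mem_interior hDc hD0).1 hw)]
    exact (half_log_div_le_iff (gauge_nonneg _) hw).2 h

theorem hilbertDist_vadd_of_hilbertBallGauge_eq (hDc : Convex ℝ D) (hDcomp : IsCompact D)
    (hD0 : D ∈ 𝓝 0) (p : ℝ²) {ρ : ℝ} {w : ℝ²}
    (h : hilbertBallGauge D (Real.exp (2 * ρ)) w = Real.exp (2 * ρ) - 1) :
    p + w ∈ interior (p +ᵥ D) ∧ hilbertDist (p +ᵥ D) p (p + w) = ρ := by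
  have hw := gauge_lt_one_of_hilbertBallGauge_le (Real.exp_pos _) h.le
  have hwD := (gauge_lt_one_iff_mem_interior hDc hD0).1 hw
  refine ⟨by rw [interior_vadd, ← vadd_eq_add]; exact vadd_mem_vadd_set hwD, ?_⟩
  rw [hilbertDist_vadd hDc hDcomp hD0 p hwD]
  exact (half_log_div_eq_iff (gauge_nonneg _) hw).2 h

end

theorem hilbertBall_polygon_general (V : Finset (EuclideanSpace ℝ (Fin 2))) (m : ℕ)
    (hm : V.card = m) (Ω : Set (EuclideanSpace ℝ (Fin 2)))
    (hΩ : Ω = convexHull ℝ (V : Set (EuclideanSpace ℝ (Fin 2))))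
    (p : EuclideanSpace ℝ (Fin 2)) (hp : p ∈ interior Ω) (ρ : ℝ) (hρ : 0 < ρ) :
    ∃ S : Finset (EuclideanSpace ℝ (Fin 2)),
      S.card ≤ 2 * m ∧
      (∀ x ∈ S, x ∈ interior Ω ∧ hilbertDist Ω p x = ρ ∧
        ∃ v ∈ V, Collinear ℝ ({p, v, x} : Set (EuclideanSpace ℝ (Fin 2)))) ∧
      {x | x ∈ interior Ω ∧ hilbertDist Ω p x ≤ ρ} =
        convexHull ℝ (S : Set (EuclideanSpace ℝ (Fin 2))) := by
  obtain ⟨D, rfl⟩ : ∃ D, Ω = p +ᵥ D := ⟨-p +ᵥ Ω, (vadd_neg_vadd p Ω).symm⟩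
  have hDV : D = convexHull ℝ ↑(V.image (· - p)) := by
    rw [← neg_vadd_vadd p D, hΩ, ← convexHull_vadd, Finset.coe_image, ← image_vadd]
    simp [neg_add_eq_sub]
  have hDc : Convex ℝ D := hDV ▸ convex_convexHull ℝ _
  have hDcomp : IsCompact D := hDV ▸ (Finset.finite_toSet _).isCompact_convexHull ℝ
  have hD0 : D ∈ 𝓝 0 := by
    rw [interior_vadd, mem_vadd_set_iff_neg_vadd_mem] at hp
    simpa [mem_interior_iff_mem_nhds] using hp
  set T := (V.image (· - p)).erase 0
  have hT : D.extremePoints ℝ ⊆ T := fun d hd => Finset.mem_erase.2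
    ⟨fun h => (disjoint_interior_extremePoints D).ne_of_mem (mem_interior_iff_mem_nhds.2 hD0)
      hd h.symm, extremePoints_convexHull_subset (hDV ▸ hd)⟩
  set K := Real.exp (2 * ρ)
  have hK : 1 < K := Real.one_lt_exp_iff.2 (by positivity)
  refine ⟨(spokes D K (K - 1) T).image (p + ·), ?_, ?_, ?_⟩
  · grw [Finset.card_image_le, card_spokes_le, Finset.card_erase_le, Finset.card_image_le, hm]
  · simp only [Finset.mem_image]
    rintro _ ⟨x, hx, rfl⟩
    obtain ⟨d, hd, r, rfl, hx⟩ := exists_smul_of_mem_spokes hD0 hDcomp.isBounded (by positivity)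
      (by linarith) (Finset.notMem_erase 0 _) hx
    obtain ⟨v, hv, rfl⟩ := Finset.mem_image.1 (Finset.mem_of_mem_erase hd)
    exact ⟨(hilbertDist_vadd_of_hilbertBallGauge_eq hDc hDcomp hD0 p hx).1,
      (hilbertDist_vadd_of_hilbertBallGauge_eq hDc hDcomp hD0 p hx).2, v, hv,
      collinear_insert_add_smul_sub p v r⟩
  · rw [setOf_hilbertBall_eq_vadd hDc hDcomp hD0, setOf_hilbertBallGauge_le_eq_convexHull
      finrank_euclideanSpace_fin hDc hDcomp hD0 (by positivity) (by linarith) hT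
      (Finset.notMem_erase 0 _), Finset.coe_image, ← convexHull_vadd, ← image_vadd]
    rfl

/-- In the Hilbert geometry of a convex `m`-gon, the closed Hilbert ball
`B(p,ρ)` is a convex polygon with at most `2m` vertices: it is the convex hull of the
(at most) `2m` points at Hilbert distance `ρ` from `p` along the spokes through the
vertices of `Ω`. -/
theorem hilbertBall_polygon (V : Finset (EuclideanSpace ℝ (Fin 2))) (m : ℕ)
    (hm : V.card = m) (Ω : Set (EuclideanSpace ℝ (Fin 2)))
    (hΩ : Ω = convexHull ℝ (V : Set (EuclideanSpace ℝ (Fin 2))))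
    (hint : (interior Ω).Nonempty)
    (p : EuclideanSpace ℝ (Fin 2)) (hp : p ∈ interior Ω) (ρ : ℝ) (hρ : 0 < ρ) :
    ∃ S : Finset (EuclideanSpace ℝ (Fin 2)),
      S.card ≤ 2 * m ∧
      (∀ x ∈ S, x ∈ interior Ω ∧ hilbertDist Ω p x = ρ ∧
        ∃ v ∈ V, Collinear ℝ ({p, v, x} : Set (EuclideanSpace ℝ (Fin 2)))) ∧
      {x | x ∈ interior Ω ∧ hilbertDist Ω p x ≤ ρ} =
        convexHull ℝ (S : Set (EuclideanSpace ℝ (Fin 2))) :=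
  hilbertBall_polygon_general V m hm Ω hΩ p hp ρ hρ
end
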